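/- arXiv:2205.12937 — 8 statements merged into one kernel-verified Lean document; each statement's English description precedes it below -/
import Mathlib

section
/- Assume 0 ≤ Y ≤ 1 almost surely, that every linear functional bᵀX (b ∈ ℝ^p) lies in L²(μ), and that there exists p_min ∈ (0, 1) with p_min ≤ E[Y | X] ≤ 1 − p_min almost surely, where E[Y | X] is the conditional expectation of Y given the σ-algebra generated by X. Suppose X satisfies the L²–L¹ equivalence: there is τ ≥ 1 such that ‖bᵀX‖_{L2} ≤ τ‖bᵀX‖_{L1} for all b ∈ ℝ^p. Fix b̂ ∈ ℝ^p and define the logistic (cross-entropy) loss ℓ = −Y·log(1/(1 + exp(−b̂ᵀX))) − (1 − Y)·log(1 − 1/(1 + exp(−b̂ᵀX))). Then ‖ℓ‖_{L2} ≤ (2τ/p_min) · E[ℓ]. -/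
open MeasureTheory

/-- The `L_r(μ)` norm of a real random variable `W`: `(E[|W|^r])^{1/r}`. -/
noncomputable def Lnorm {Ω : Type*} [MeasurableSpace Ω] (μ : Measure Ω) (r : ℝ)
    (W : Ω → ℝ) : ℝ :=
  (∫ ω, |W ω| ^ r ∂μ) ^ (1 / r)

/-!
With `u = b̂ᵀX` and the softplus `s(t) = log (1 + eᵗ)`, the loss is `ℓ = s(u) - Y u`.
Pointwise `0 ≤ ℓ ≤ log 2 + |u|`, so Minkowski gives `‖ℓ‖₂ ≤ log 2 + ‖u‖₂ ≤ log 2 + τ ‖u‖₁`.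
Since `ℓ` is affine in `Y` and `u` is `σ(X)`-measurable, `E ℓ = E[s(u) - η u]` with `η = E[Y | X]`,
and `s(u) - η u = η s(-u) + (1 - η) s(u) ≥ p_min (s(u) + s(-u)) ≥ p_min (|u| / 2 + log 2)`.
Hence `E ℓ ≥ p_min (‖u‖₁ / 2 + log 2)`, and the two bounds combine because `τ ≥ 1`.
-/

open scoped ENNReal

namespace Real

noncomputable def softplus (t : ℝ) : ℝ := log (1 + exp t)

lemma continuous_softplus : Continuous softplus :=
  (continuous_const.add continuous_exp).log fun t => (add_pos one_pos (exp_pos t)).ne'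

lemma softplus_nonneg (t : ℝ) : 0 ≤ softplus t :=
  log_nonneg (by linarith [exp_pos t])

lemma le_softplus (t : ℝ) : t ≤ softplus t := by
  rw [softplus, le_log_iff_exp_le (by positivity)]
  linarith

lemma softplus_le_log_two_add_abs (t : ℝ) : softplus t ≤ log 2 + |t| := by
  have h : 1 + exp t ≤ 2 * exp |t| := by
    linarith [exp_le_exp.2 (le_abs_self t), one_le_exp (abs_nonneg t)]
  calc softplus t ≤ log (2 * exp |t|) := log_le_log (by positivity) h
    _ = log 2 + |t| := by rw [log_mul two_ne_zero (exp_ne_zero _), log_exp]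

lemma softplus_sub_softplus_neg (t : ℝ) : softplus t - softplus (-t) = t := by
  have h : 1 + exp t = exp t * (1 + exp (-t)) := by
    rw [mul_add, ← exp_add]; simp [add_comm]
  rw [softplus, softplus, h, log_mul (exp_ne_zero _) (by positivity), log_exp]; ring

lemma softplus_sub_mul_eq (y t : ℝ) :
    softplus t - y * t = y * softplus (-t) + (1 - y) * softplus t := by
  linear_combination y * softplus_sub_softplus_neg t

lemma two_mul_log_two_le_softplus_add_softplus_neg (t : ℝ) :
    2 * log 2 ≤ softplus t + softplus (-t) := by
  have h : (1 + exp t) * (1 + exp (-t)) = 2 + 2 * cosh t := by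
    rw [cosh_eq, add_mul, one_mul, mul_add, mul_one, ← exp_add, add_neg_cancel, exp_zero]; ring
  rw [softplus, softplus, ← log_mul (by positivity) (by positivity), h, two_mul,
    ← log_mul two_ne_zero two_ne_zero]
  exact log_le_log (by norm_num) (by linarith [one_le_cosh t])

lemma abs_div_two_add_log_two_le_softplus_add_softplus_neg (t : ℝ) :
    |t| / 2 + log 2 ≤ softplus t + softplus (-t) := by
  have h : |t| ≤ softplus t + softplus (-t) := by
    rcases abs_cases t with ⟨ht, -⟩ | ⟨ht, -⟩ <;> rw [ht]
    · linarith [le_softplus t, softplus_nonneg (-t)]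
    · linarith [le_softplus (-t), softplus_nonneg t]
  linarith [two_mul_log_two_le_softplus_add_softplus_neg t]

lemma abs_softplus_sub_mul_le {y : ℝ} (hy : y ∈ Set.Icc (0 : ℝ) 1) (t : ℝ) :
    |softplus t - y * t| ≤ log 2 + |t| := by
  have h₁ := softplus_le_log_two_add_abs t
  have h₂ := softplus_le_log_two_add_abs (-t)
  rw [abs_neg] at h₂
  have h₀ : 0 ≤ softplus t - y * t := by
    rw [softplus_sub_mul_eq]
    nlinarith [hy.1, hy.2, softplus_nonneg t, softplus_nonneg (-t)]
  rw [abs_of_nonneg h₀, softplus_sub_mul_eq]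
  nlinarith [hy.1, hy.2]

lemma mul_abs_div_two_add_log_two_le_softplus_sub_mul {a η : ℝ} (ha₀ : 0 ≤ a) (ha : a ≤ η)
    (ha' : η ≤ 1 - a) (t : ℝ) : a * (|t| / 2 + log 2) ≤ softplus t - η * t := by
  have h := abs_div_two_add_log_two_le_softplus_add_softplus_neg t
  rw [softplus_sub_mul_eq]
  nlinarith [softplus_nonneg t, softplus_nonneg (-t)]

lemma neg_log_sigmoid (t : ℝ) : -log (sigmoid t) = softplus (-t) := by
  rw [sigmoid_def, log_inv, neg_neg, softplus]

lemma logistic_loss_eq_softplus_sub_mul (y t : ℝ) :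
    -y * log (1 / (1 + exp (-t))) - (1 - y) * log (1 - 1 / (1 + exp (-t)))
      = softplus t - y * t := by
  have h₁ := neg_log_sigmoid t
  have h₂ := neg_log_sigmoid (-t)
  rw [neg_neg] at h₂
  rw [one_div, ← sigmoid_def, ← sigmoid_neg]
  linear_combination y * h₁ + (1 - y) * h₂ - y * softplus_sub_softplus_neg t

end Real

open Real

namespace MeasureTheory

variable {Ω : Type*} {m m₀ : MeasurableSpace Ω} {μ : Measure[m₀] Ω}

lemma Lnorm_one (f : Ω → ℝ) : Lnorm μ 1 f = ∫ ω, |f ω| ∂μ := by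
  simp [Lnorm]

lemma MemLp.Lnorm_eq_toReal_eLpNorm {f : Ω → ℝ} {p : ℝ≥0∞} (hp0 : p ≠ 0) (hp : p ≠ ∞)
    (hf : MemLp f p μ) : Lnorm μ p.toReal f = (eLpNorm f p μ).toReal := by
  rw [hf.eLpNorm_eq_integral_rpow_norm hp0 hp, ENNReal.toReal_ofReal (by positivity), Lnorm,
    one_div]
  rfl

lemma Lnorm_le_add_of_abs_le [IsProbabilityMeasure μ] {p : ℝ≥0∞} (hp : 1 ≤ p) (hp' : p ≠ ∞)
    {f u : Ω → ℝ} {c : ℝ} (hc : 0 ≤ c) (hu : MemLp u p μ) (hf : AEStronglyMeasurable f μ)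
    (hfu : ∀ᵐ ω ∂μ, |f ω| ≤ c + |u ω|) : Lnorm μ p.toReal f ≤ c + Lnorm μ p.toReal u := by
  have hp0 : p ≠ 0 := (zero_lt_one.trans_le hp).ne'
  have hg : MemLp (fun ω => c + |u ω|) p μ := (memLp_const c).add hu.norm
  have hfg : ∀ᵐ ω ∂μ, ‖f ω‖ ≤ c + |u ω| := hfu
  have hf' : MemLp f p μ := hg.of_le hf (hfg.mono fun ω h => h.trans (le_abs_self _))
  have hle : eLpNorm f p μ ≤ eLpNorm (fun _ => c) p μ + eLpNorm u p μ :=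
    calc eLpNorm f p μ ≤ eLpNorm (fun ω => c + |u ω|) p μ := eLpNorm_mono_ae_real hfg
      _ ≤ eLpNorm (fun _ => c) p μ + eLpNorm (fun ω => ‖u ω‖) p μ :=
        eLpNorm_add_le aestronglyMeasurable_const hu.norm.1 hp
      _ = eLpNorm (fun _ => c) p μ + eLpNorm u p μ := by rw [eLpNorm_norm]
  rw [hf'.Lnorm_eq_toReal_eLpNorm hp0 hp', hu.Lnorm_eq_toReal_eLpNorm hp0 hp']
  calc (eLpNorm f p μ).toReal ≤ (eLpNorm (fun _ => c) p μ + eLpNorm u p μ).toReal :=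
        ENNReal.toReal_mono (ENNReal.add_ne_top.2 ⟨(memLp_const c).2.ne, hu.2.ne⟩) hle
    _ = c + (eLpNorm u p μ).toReal := by
        rw [ENNReal.toReal_add (memLp_const c).2.ne hu.2.ne, eLpNorm_const' c hp0 hp']
        simp [abs_of_nonneg hc]

lemma integral_condExp_mul (hm : m ≤ m₀) [SigmaFinite (μ.trim hm)] {f g : Ω → ℝ}
    (hg : StronglyMeasurable[m] g) (hfg : Integrable (f * g) μ) (hf : Integrable f μ) :
    ∫ ω, (μ[f|m]) ω * g ω ∂μ = ∫ ω, f ω * g ω ∂μ :=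
  calc ∫ ω, (μ[f|m]) ω * g ω ∂μ = ∫ ω, (μ[f * g|m]) ω ∂μ :=
        integral_congr_ae (condExp_mul_of_stronglyMeasurable_right hg hfg hf).symm
    _ = ∫ ω, f ω * g ω ∂μ := integral_condExp hm

lemma Integrable.softplus [IsFiniteMeasure μ] {u : Ω → ℝ} (hu : Integrable u μ) :
    Integrable (fun ω => softplus (u ω)) μ :=
  ((integrable_const (log 2)).add hu.abs).mono'
    (continuous_softplus.comp_aestronglyMeasurable hu.aestronglyMeasurable)
    (ae_of_all _ fun ω => by
      rw [norm_of_nonneg (softplus_nonneg _)]; exact softplus_le_log_two_add_abs _)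

lemma mul_integral_abs_div_two_add_log_two_le [IsProbabilityMeasure μ] (hm : m ≤ m₀)
    {u Y : Ω → ℝ} (hu : StronglyMeasurable[m] u) (hui : Integrable u μ)
    (hY : AEStronglyMeasurable Y μ) (hY01 : ∀ᵐ ω ∂μ, Y ω ∈ Set.Icc (0 : ℝ) 1) {a : ℝ}
    (ha : 0 ≤ a) (hcond : ∀ᵐ ω ∂μ, a ≤ (μ[Y|m]) ω ∧ (μ[Y|m]) ω ≤ 1 - a) :
    a * ((∫ ω, |u ω| ∂μ) / 2 + log 2) ≤ ∫ ω, (softplus (u ω) - Y ω * u ω) ∂μ := by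
  have hY1 : ∀ᵐ ω ∂μ, |Y ω| ≤ (1 : ℝ) :=
    hY01.mono fun ω h => by simpa [abs_of_nonneg h.1] using h.2
  have hYi : Integrable Y μ := (integrable_const 1).mono' hY hY1
  have hYu : Integrable (fun ω => Y ω * u ω) μ := hui.bdd_mul hY hY1
  have hηu : Integrable (fun ω => (μ[Y|m]) ω * u ω) μ :=
    hui.bdd_mul integrable_condExp.aestronglyMeasurable (ae_bdd_abs_condExp_of_ae_bdd_abs hY1)
  have hbound : Integrable (fun ω => a * (|u ω| / 2 + log 2)) μ :=
    ((hui.abs.div_const 2).add (integrable_const _)).const_mul a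
  calc a * ((∫ ω, |u ω| ∂μ) / 2 + log 2) = ∫ ω, a * (|u ω| / 2 + log 2) ∂μ := by
        rw [integral_const_mul, integral_add (hui.abs.div_const 2) (integrable_const _),
          integral_div]
        simp
    _ ≤ ∫ ω, (softplus (u ω) - (μ[Y|m]) ω * u ω) ∂μ :=
        integral_mono_ae hbound (hui.softplus.sub hηu) (hcond.mono fun ω h =>
          mul_abs_div_two_add_log_two_le_softplus_sub_mul ha h.1 h.2 (u ω))
    _ = ∫ ω, (softplus (u ω) - Y ω * u ω) ∂μ := by
        rw [integral_sub hui.softplus hηu, integral_sub hui.softplus hYu,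
          integral_condExp_mul hm hu hYu hYi]

end MeasureTheory

/-- **Logistic (cross-entropy) loss of a linear predictor under `L²–L¹` moment equivalence.**
Assume `0 ≤ Y ≤ 1` a.s., all linear functionals `bᵀX` are in `L²(μ)`, there is
`pmin ∈ (0,1)` with `pmin ≤ E[Y | X] ≤ 1 − pmin` a.e., and `‖bᵀX‖_{L2} ≤ τ ‖bᵀX‖_{L1}`
for all `b`, with `τ ≥ 1`. Then for any fixed `bhat`, the logistic loss
`ℓ = −Y log(1/(1+exp(−bhatᵀX))) − (1−Y) log(1 − 1/(1+exp(−bhatᵀX)))` satisfies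
`‖ℓ‖_{L2} ≤ (2τ/pmin) E[ℓ]`. -/
theorem logistic_loss_L2_bound {Ω : Type*} [MeasurableSpace Ω] (μ : Measure Ω)
    [IsProbabilityMeasure μ] {p : ℕ} (X : Ω → Fin p → ℝ) (Y : Ω → ℝ)
    (hX : Measurable X) (hY : Measurable Y)
    (hY01 : ∀ᵐ ω ∂μ, Y ω ∈ Set.Icc (0 : ℝ) 1)
    (hX2 : ∀ b : Fin p → ℝ, MemLp (fun ω => ∑ i, b i * X ω i) 2 μ)
    (pmin : ℝ) (hpmin : pmin ∈ Set.Ioo (0 : ℝ) 1)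
    (hcond : ∀ᵐ ω ∂μ,
      pmin ≤ (μ[Y | MeasurableSpace.comap X inferInstance]) ω ∧
        (μ[Y | MeasurableSpace.comap X inferInstance]) ω ≤ 1 - pmin)
    (τ : ℝ) (hτ : 1 ≤ τ)
    (hequiv : ∀ b : Fin p → ℝ,
      Lnorm μ 2 (fun ω => ∑ i, b i * X ω i) ≤ τ * Lnorm μ 1 (fun ω => ∑ i, b i * X ω i))
    (bhat : Fin p → ℝ) :
    Lnorm μ 2 (fun ω =>
        -(Y ω) * Real.log (1 / (1 + Real.exp (-(∑ i, bhat i * X ω i))))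
          - (1 - Y ω) * Real.log (1 - 1 / (1 + Real.exp (-(∑ i, bhat i * X ω i)))))
      ≤ (2 * τ / pmin) * ∫ ω,
          (-(Y ω) * Real.log (1 / (1 + Real.exp (-(∑ i, bhat i * X ω i))))
            - (1 - Y ω) * Real.log (1 - 1 / (1 + Real.exp (-(∑ i, bhat i * X ω i))))) ∂μ := by
  simp only [logistic_loss_eq_softplus_sub_mul]
  set u : Ω → ℝ := fun ω => ∑ i, bhat i * X ω i
  have hu : StronglyMeasurable[MeasurableSpace.comap X inferInstance] u :=
    ((continuous_finsetSum _ fun i _ => continuous_const.mul (continuous_apply i)).measurable.comp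
      (comap_measurable X)).stronglyMeasurable
  have hupper : Lnorm μ 2 (fun ω => softplus (u ω) - Y ω * u ω) ≤ log 2 + Lnorm μ 2 u := by
    have h := Lnorm_le_add_of_abs_le (p := 2) (f := fun ω => softplus (u ω) - Y ω * u ω)
      one_le_two ENNReal.ofNat_ne_top (log_nonneg one_le_two) (hX2 bhat) ((continuous_softplus.comp_aestronglyMeasurable (hX2 bhat).1).sub
        (hY.aestronglyMeasurable.mul (hX2 bhat).1))
      (hY01.mono fun ω h => abs_softplus_sub_mul_le h (u ω))
    rwa [ENNReal.toReal_ofNat] at h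
  have hlower : pmin * (Lnorm μ 1 u / 2 + log 2) ≤ ∫ ω, (softplus (u ω) - Y ω * u ω) ∂μ := by
    rw [Lnorm_one]
    exact mul_integral_abs_div_two_add_log_two_le hX.comap_le hu ((hX2 bhat).integrable one_le_two)
      hY.aestronglyMeasurable hY01 hpmin.1.le hcond
  calc Lnorm μ 2 (fun ω => softplus (u ω) - Y ω * u ω) ≤ log 2 + τ * Lnorm μ 1 u :=
        hupper.trans (by gcongr; exact hequiv bhat)
    _ ≤ 2 * τ / pmin * (pmin * (Lnorm μ 1 u / 2 + log 2)) := by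
        have := hpmin.1
        field_simp
        nlinarith [log_pos one_lt_two]
    _ ≤ 2 * τ / pmin * ∫ ω, (softplus (u ω) - Y ω * u ω) ∂μ :=
        mul_le_mul_of_nonneg_left hlower (div_nonneg (by linarith) hpmin.1.le)
end

section
/- Set K_n = ⌈m_n/s_n − 2⌉ (so that K_n ≥ 1 for all sufficiently large n) and consider, for each n, the finite grid G_n = { p_n/(m_n − k·s_n) : k = 1, …, K_n } of positive real numbers. Then: (i) for every ζ ∈ [γ, ∞), min_{1 ≤ k ≤ K_n} | p_n/(m_n − k·s_n) − ζ | → 0 as n → ∞; and (ii) the largest grid point satisfies p_n/(m_n − K_n·s_n) → ∞ as n → ∞. Consequently the nearest point of G_n to any ζ* ∈ [γ, ∞] converges to ζ*. -/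
open Filter Topology

set_option maxHeartbeats 1000000 in
/-- **Space-filling property of the zero-step subsampling grid.**
Let `(pₙ), (mₙ), (sₙ)` be positive integers with `sₙ ≤ mₙ`, `pₙ/mₙ → γ ∈ (0, ∞)` and
`sₙ/mₙ → 0`. Set `Kₙ = ⌈mₙ/sₙ − 2⌉` (so `Kₙ ≥ 1` eventually) and consider the grids
`Gₙ = {pₙ/(mₙ − k·sₙ) : k = 1, …, Kₙ}`. Then:
(i) for every `ζ ∈ [γ, ∞)`, `min_{1 ≤ k ≤ Kₙ} |pₙ/(mₙ − k·sₙ) − ζ| → 0`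
(phrased as: for every `ε > 0`, eventually some admissible `k` is within `ε`); and
(ii) the largest grid point `pₙ/(mₙ − Kₙ·sₙ) → ∞`. -/
theorem zero_step_grid_space_filling (p m s : ℕ → ℕ)
    (hp : ∀ n, 0 < p n) (hs : ∀ n, 0 < s n) (hsm : ∀ n, s n ≤ m n)
    (γ : ℝ) (hγ : 0 < γ)
    (hratio : Tendsto (fun n => (p n : ℝ) / (m n : ℝ)) atTop (nhds γ))
    (hstep : Tendsto (fun n => (s n : ℝ) / (m n : ℝ)) atTop (nhds 0))
    (K : ℕ → ℕ) (hK : ∀ n, K n = (⌈(m n : ℝ) / (s n : ℝ) - 2⌉).toNat) :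
    (∀ᶠ n in atTop, 1 ≤ K n) ∧
    (∀ ζ : ℝ, γ ≤ ζ → ∀ ε : ℝ, 0 < ε → ∀ᶠ n in atTop,
      ∃ k : ℕ, 1 ≤ k ∧ k ≤ K n ∧
        |(p n : ℝ) / ((m n : ℝ) - (k : ℝ) * (s n : ℝ)) - ζ| < ε) ∧
    Tendsto (fun n => (p n : ℝ) / ((m n : ℝ) - (K n : ℝ) * (s n : ℝ))) atTop atTop := by
  classical
  have hm : ∀ n, 0 < m n := fun n => lt_of_lt_of_le (hs n) (hsm n)
  have hM : ∀ n, (0:ℝ) < (m n : ℝ) := fun n => by exact_mod_cast hm n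
  have hS : ∀ n, (0:ℝ) < (s n : ℝ) := fun n => by exact_mod_cast hs n
  have hP : ∀ n, (0:ℝ) < (p n : ℝ) := fun n => by exact_mod_cast hp n
  -- the event on which everything works
  have hEv : ∀ᶠ n in atTop, (s n : ℝ) / (m n : ℝ) < 1/4 :=
    hstep.eventually_lt_const (by norm_num)
  -- pointwise facts about K on the event
  have hKfact : ∀ n, (s n : ℝ) / (m n : ℝ) < 1/4 →
      1 ≤ K n ∧ (m n : ℝ) / (s n : ℝ) - 2 ≤ (K n : ℝ) ∧
        (K n : ℝ) < (m n : ℝ) / (s n : ℝ) - 1 := by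
    intro n hn
    set x : ℝ := (m n : ℝ) / (s n : ℝ) - 2 with hx
    have hms4 : (4:ℝ) < (m n : ℝ) / (s n : ℝ) := by
      rw [lt_div_iff₀ (hS n)]
      rw [div_lt_iff₀ (hM n)] at hn
      nlinarith [hS n, hM n]
    have hxpos : 0 < x := by simp only [hx]; linarith
    have hceil : 0 < ⌈x⌉ := Int.ceil_pos.2 hxpos
    have hK1 : 1 ≤ K n := by rw [hK n, ← hx]; omega
    have hcast : (K n : ℝ) = ((⌈x⌉ : ℤ) : ℝ) := by
      rw [hK n, ← hx]
      exact_mod_cast Int.toNat_of_nonneg hceil.le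
    refine ⟨hK1, ?_, ?_⟩
    · rw [hcast]; exact Int.le_ceil x
    · rw [hcast]
      have := Int.ceil_lt_add_one x
      simp only [hx] at this ⊢
      linarith
  -- m/s → ∞
  have hms : Tendsto (fun n => (m n : ℝ) / (s n : ℝ)) atTop atTop := by
    have h0 : Tendsto (fun n => (s n : ℝ) / (m n : ℝ)) atTop (𝓝[>] (0:ℝ)) := by
      apply tendsto_nhdsWithin_of_tendsto_nhds_of_eventually_within _ hstep
      exact Eventually.of_forall fun n => div_pos (hS n) (hM n)
    have := h0.inv_tendsto_nhdsGT_zero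
    refine this.congr fun n => ?_
    simp [inv_div]
  -- largest grid point → ∞
  have hbig : Tendsto (fun n => (p n : ℝ) / ((m n : ℝ) - (K n : ℝ) * (s n : ℝ)))
      atTop atTop := by
    have hlow : Tendsto (fun n => (p n : ℝ) / (2 * (s n : ℝ))) atTop atTop := by
      have h1 : Tendsto (fun n => (p n : ℝ) / (m n : ℝ) * ((m n : ℝ) / (s n : ℝ)))
          atTop atTop := hratio.pos_mul_atTop hγ hms
      have h2 := h1.atTop_div_const (by norm_num : (0:ℝ) < 2)
      refine h2.congr fun n => ?_
      field_simp [(hM n).ne']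
    refine tendsto_atTop_mono' atTop ?_ hlow
    filter_upwards [hEv] with n hn
    obtain ⟨hK1, hKlo, hKhi⟩ := hKfact n hn
    have hMS : (m n : ℝ) / (s n : ℝ) * (s n : ℝ) = (m n : ℝ) :=
      div_mul_cancel₀ _ (hS n).ne'
    have hd1 : (s n : ℝ) < (m n : ℝ) - (K n : ℝ) * (s n : ℝ) := by
      have := mul_lt_mul_of_pos_right hKhi (hS n)
      nlinarith
    have hd2 : (m n : ℝ) - (K n : ℝ) * (s n : ℝ) ≤ 2 * (s n : ℝ) := by
      have := mul_le_mul_of_nonneg_right hKlo (hS n).le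
      nlinarith
    have := hP n
    gcongr
    linarith [hS n]
  refine ⟨hEv.mono fun n hn => (hKfact n hn).1, ?_, hbig⟩
  -- the covering property
  intro ζ hζγ ε hε
  have hζ : 0 < ζ := lt_of_lt_of_le hγ hζγ
  -- f₁ → γ
  have hf1 : Tendsto (fun n => (p n : ℝ) / ((m n : ℝ) - (s n : ℝ))) atTop (nhds γ) := by
    have h1 : Tendsto (fun n => (p n : ℝ) / (m n : ℝ) / (1 - (s n : ℝ) / (m n : ℝ)))
        atTop (nhds (γ / (1 - 0))) := hratio.div (tendsto_const_nhds.sub hstep) (by norm_num)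
    simp only [sub_zero, div_one] at h1
    refine h1.congr' ?_
    filter_upwards [hEv] with n hn
    have hd : (0:ℝ) < (m n : ℝ) - (s n : ℝ) := by
      rw [div_lt_iff₀ (hM n)] at hn
      nlinarith [hM n]
    have h1ne : (1:ℝ) - (s n : ℝ) / (m n : ℝ) ≠ 0 := by
      intro hcon
      rw [div_lt_iff₀ (hM n)] at hn
      have : (s n : ℝ) / (m n : ℝ) = 1 := by linarith
      rw [div_eq_one_iff_eq (hM n).ne'] at this
      nlinarith [hM n]
    have heq : (1:ℝ) - (s n : ℝ) / (m n : ℝ) = ((m n : ℝ) - (s n : ℝ)) / (m n : ℝ) := by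
      rw [eq_div_iff (hM n).ne', sub_mul, one_mul, div_mul_cancel₀ _ (hM n).ne']
    rw [heq, div_div_div_cancel_right₀]
    exact (hM n).ne'
  -- s/p → 0
  have hsp : Tendsto (fun n => (s n : ℝ) / (p n : ℝ)) atTop (nhds 0) := by
    have h1 : Tendsto (fun n => ((s n : ℝ) / (m n : ℝ)) / ((p n : ℝ) / (m n : ℝ)))
        atTop (nhds (0 / γ)) := hstep.div hratio hγ.ne'
    simp only [zero_div] at h1
    refine h1.congr fun n => ?_
    rw [div_div_div_cancel_right₀]
    exact (hM n).ne'
  have δpos : 0 < min (1 / (2 * ζ)) (ε / (2 * ζ ^ 2)) := by positivity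
  have e2 : ∀ᶠ n in atTop, (p n : ℝ) / ((m n : ℝ) - (s n : ℝ)) < ζ + ε :=
    hf1.eventually_lt_const (by linarith)
  have e3 : ∀ᶠ n in atTop, ζ < (p n : ℝ) / ((m n : ℝ) - (K n : ℝ) * (s n : ℝ)) :=
    hbig.eventually_gt_atTop ζ
  have e4 : ∀ᶠ n in atTop,
      (s n : ℝ) / (p n : ℝ) < min (1 / (2 * ζ)) (ε / (2 * ζ ^ 2)) :=
    hsp.eventually_lt_const δpos
  filter_upwards [hEv, e2, e3, e4] with n hn h2 h3 h4
  obtain ⟨hK1, hKlo, hKhi⟩ := hKfact n hn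
  set M : ℝ := (m n : ℝ)
  set S : ℝ := (s n : ℝ)
  set P : ℝ := (p n : ℝ)
  have hMS : M / S * S = M := div_mul_cancel₀ _ (hS n).ne'
  have hdK : S < M - (K n : ℝ) * S := by
    have := mul_lt_mul_of_pos_right hKhi (hS n)
    nlinarith
  -- denominators are positive for all k ≤ K n
  have hden : ∀ k : ℕ, k ≤ K n → S < M - (k : ℝ) * S := by
    intro k hk
    have : (k : ℝ) ≤ (K n : ℝ) := by exact_mod_cast hk
    nlinarith [hS n]
  have hex : ∃ k : ℕ, 1 ≤ k ∧ k ≤ K n ∧ ζ ≤ P / (M - (k : ℝ) * S) :=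
    ⟨K n, hK1, le_refl _, h3.le⟩
  obtain ⟨k, ⟨hk1, hkK, hkζ⟩, hmin⟩ :
      ∃ k : ℕ, (1 ≤ k ∧ k ≤ K n ∧ ζ ≤ P / (M - (k : ℝ) * S)) ∧
        ∀ j : ℕ, j < k → ¬(1 ≤ j ∧ j ≤ K n ∧ ζ ≤ P / (M - (j : ℝ) * S)) :=
    ⟨Nat.find hex, Nat.find_spec hex, fun j hj => Nat.find_min hex hj⟩
  clear hex
  have hDpos : (0:ℝ) < M - (k : ℝ) * S := lt_trans (hS n) (hden k hkK)
  rcases eq_or_lt_of_le hk1 with h1k | h2k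
  · -- k = 1 : f₁ itself is within ε
    refine ⟨1, le_refl _, le_trans (le_of_eq h1k) hkK, ?_⟩
    have hk' : (k : ℝ) = 1 := by exact_mod_cast h1k.symm
    rw [hk', one_mul] at hkζ hDpos
    simp only [Nat.cast_one, one_mul]
    rw [abs_of_nonneg (by linarith)]
    linarith
  · -- k ≥ 2 : crossing argument
    refine ⟨k, hk1, hkK, ?_⟩
    have hprev := hmin (k - 1) (by omega)
    push_neg at hprev
    have hprevlt : P / (M - ((k - 1 : ℕ) : ℝ) * S) < ζ :=
      hprev (by omega) (by omega)
    have hcast : ((k - 1 : ℕ) : ℝ) = (k : ℝ) - 1 := by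
      have : (1:ℕ) ≤ k := hk1
      push_cast [Nat.cast_sub this]
      ring
    rw [hcast] at hprevlt
    have hD1pos : (0:ℝ) < M - ((k : ℝ) - 1) * S := by
      have := hden (k - 1) (by omega)
      rw [hcast] at this
      linarith [hS n]
    have hPlt : P < ζ * (M - ((k : ℝ) - 1) * S) := by
      rw [div_lt_iff₀ hD1pos] at hprevlt
      linarith
    have hPge : ζ * (M - (k : ℝ) * S) ≤ P := by
      rw [le_div_iff₀ hDpos] at hkζ
      linarith
    have h4a : S / P < 1 / (2 * ζ) := lt_of_lt_of_le h4 (min_le_left _ _)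
    have h4b : S / P < ε / (2 * ζ ^ 2) := lt_of_lt_of_le h4 (min_le_right _ _)
    have h2ζ : (0:ℝ) < 2 * ζ := by linarith
    have h2ζ2 : (0:ℝ) < 2 * ζ ^ 2 := by nlinarith
    have hSP1 : 2 * ζ * S < P := by
      rw [div_lt_div_iff₀ (hP n) h2ζ] at h4a
      nlinarith
    have hSP2 : 2 * ζ ^ 2 * S < ε * P := by
      rw [div_lt_div_iff₀ (hP n) h2ζ2] at h4b
      nlinarith
    set D : ℝ := M - (k : ℝ) * S with hD
    have hexp : M - ((k : ℝ) - 1) * S = D + S := by rw [hD]; ring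
    rw [hexp] at hPlt
    have hP2 : P < 2 * ζ * D := by nlinarith
    have hζSD : ζ * S < ε * D := by nlinarith [mul_pos hζ hζ]
    have hfinal : P / D < ζ + ε := by
      rw [div_lt_iff₀ hDpos]
      nlinarith
    rw [abs_of_nonneg (by linarith)]
    linarith
end

section
/- Let ζ₁, ζ₂ ∈ (0, ∞) satisfy 1/ζ₁ + 1/ζ₂ ≤ 1/γ. For each n consider the finite grid of pairs G_n = { ( p_n/(m_n − k₁·s_n), p_n/(k₂·s_n) ) : k₁ ∈ {2, …, ⌈m_n/s_n − 2⌉}, k₂ ∈ {1, …, k₁ − 1} }. Then there exist, for all sufficiently large n, admissible indices k₁(n), k₂(n) (with 2 ≤ k₁(n) ≤ ⌈m_n/s_n − 2⌉ and 1 ≤ k₂(n) ≤ k₁(n) − 1) such that p_n/(m_n − k₁(n)·s_n) → ζ₁ and p_n/(k₂(n)·s_n) → ζ₂ as n → ∞; in particular inf_{(g₁,g₂)∈G_n} ( |g₁ − ζ₁| + |g₂ − ζ₂| ) → 0. -/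
/-!
Normalise everything by `pₙ`: with `tₙ = sₙ/pₙ → 0⁺` and `Mₙ = mₙ/pₙ → 1/γ`, the targets are
`Mₙ - k₁ tₙ ≈ 1/ζ₁` and `k₂ tₙ ≈ 1/ζ₂`. Rounding down on the mesh `tₙ` gives
`k₁ = ⌊(Mₙ - 1/ζ₁)/tₙ⌋` and `k₂ = ⌊(1/ζ₂)/tₙ⌋`, each with error at most `tₙ → 0`. Capping `k₂` at
`k₁ - 1` costs nothing in the limit, because `(k₁ - 1) tₙ → 1/γ - 1/ζ₁ ≥ 1/ζ₂`.
-/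

open Filter Topology

theorem Nat.floor_div_mul_le_of_nonneg {x t : ℝ} (hx : 0 ≤ x) (ht : 0 < t) :
    (⌊x / t⌋₊ : ℝ) * t ≤ x :=
  (le_div_iff₀ ht).1 (Nat.floor_le (div_nonneg hx ht.le))

theorem Nat.sub_lt_floor_div_mul {x t : ℝ} (ht : 0 < t) : x - t < (⌊x / t⌋₊ : ℝ) * t := by
  have := (div_lt_iff₀ ht).1 (Nat.lt_floor_add_one (x / t))
  linarith

section FloorApproximation

variable {α : Type*} {l : Filter α} {t x : α → ℝ} {a : ℝ}

theorem tendsto_natFloor_div_mul (ht : Tendsto t l (𝓝[>] 0)) (hx : Tendsto x l (𝓝 a))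
    (ha : 0 < a) : Tendsto (fun i => (⌊x i / t i⌋₊ : ℝ) * t i) l (𝓝 a) := by
  have ht₀ : Tendsto t l (𝓝 0) := tendsto_nhds_of_tendsto_nhdsWithin ht
  have ht_pos : ∀ᶠ i in l, 0 < t i := ht self_mem_nhdsWithin
  refine tendsto_of_tendsto_of_tendsto_of_le_of_le' (by simpa using hx.sub ht₀) hx ?_ ?_
  · filter_upwards [ht_pos] with i hi using (Nat.sub_lt_floor_div_mul hi).le
  · filter_upwards [ht_pos, hx.eventually (lt_mem_nhds ha)] with i hi hxi
    exact Nat.floor_div_mul_le_of_nonneg hxi.le hi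

theorem tendsto_natFloor_div_atTop (ht : Tendsto t l (𝓝[>] 0)) (hx : Tendsto x l (𝓝 a))
    (ha : 0 < a) : Tendsto (fun i => ⌊x i / t i⌋₊) l atTop :=
  tendsto_nat_floor_atTop.comp (hx.pos_mul_atTop ha ht.inv_tendsto_nhdsGT_zero)

theorem tendsto_div_of_tendsto_div_inv {y : α → ℝ} (ha : a ≠ 0)
    (h : Tendsto (fun i => x i / y i) l (𝓝 a⁻¹)) : Tendsto (fun i => y i / x i) l (𝓝 a) := by
  simpa only [inv_div, inv_inv] using h.inv₀ (inv_ne_zero ha)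

end FloorApproximation

noncomputable def gridIndex₁ (M a t : ℝ) : ℕ := ⌊(M - a) / t⌋₊

noncomputable def gridIndex₂ (M a b t : ℝ) : ℕ := min ⌊b / t⌋₊ (gridIndex₁ M a t - 1)

theorem gridIndex₁_le_ceil {M a t : ℝ} (h : 2 ≤ a / t) : gridIndex₁ M a t ≤ ⌈M / t - 2⌉₊ :=
  (Nat.floor_le_floor (by rw [sub_div]; linarith)).trans (Nat.floor_le_ceil _)

section GridIndices

variable {α : Type*} {l : Filter α} {t M : α → ℝ} {μ a b : ℝ}

theorem tendsto_gridIndex₁_atTop (ht : Tendsto t l (𝓝[>] 0)) (hM : Tendsto M l (𝓝 μ))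
    (ha : a < μ) : Tendsto (fun i => gridIndex₁ (M i) a (t i)) l atTop :=
  tendsto_natFloor_div_atTop ht (hM.sub_const a) (sub_pos.2 ha)

theorem tendsto_gridIndex₁_mul (ht : Tendsto t l (𝓝[>] 0)) (hM : Tendsto M l (𝓝 μ))
    (ha : a < μ) : Tendsto (fun i => (gridIndex₁ (M i) a (t i) : ℝ) * t i) l (𝓝 (μ - a)) :=
  tendsto_natFloor_div_mul ht (hM.sub_const a) (sub_pos.2 ha)

theorem tendsto_sub_gridIndex₁_mul (ht : Tendsto t l (𝓝[>] 0)) (hM : Tendsto M l (𝓝 μ))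
    (ha : a < μ) : Tendsto (fun i => M i - gridIndex₁ (M i) a (t i) * t i) l (𝓝 a) := by
  simpa only [sub_sub_cancel] using hM.sub (tendsto_gridIndex₁_mul ht hM ha)

theorem eventually_gridIndex₁_le_ceil (ht : Tendsto t l (𝓝[>] 0)) (ha : 0 < a) :
    ∀ᶠ i in l, gridIndex₁ (M i) a (t i) ≤ ⌈M i / t i - 2⌉₊ := by
  have h := tendsto_const_nhds.pos_mul_atTop ha ht.inv_tendsto_nhdsGT_zero
  filter_upwards [h.eventually_ge_atTop 2] with i hi using gridIndex₁_le_ceil hi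

theorem eventually_one_le_gridIndex₂ (ht : Tendsto t l (𝓝[>] 0)) (hM : Tendsto M l (𝓝 μ))
    (ha : a < μ) (hb : 0 < b) : ∀ᶠ i in l, 1 ≤ gridIndex₂ (M i) a b (t i) := by
  filter_upwards [(tendsto_gridIndex₁_atTop ht hM ha).eventually_ge_atTop 2,
    (tendsto_natFloor_div_atTop ht tendsto_const_nhds hb).eventually_ge_atTop 1] with i h₁ h₂
  exact le_min h₂ (by omega)

theorem tendsto_gridIndex₂_mul (ht : Tendsto t l (𝓝[>] 0)) (hM : Tendsto M l (𝓝 μ))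
    (hb : 0 < b) (hab : a + b ≤ μ) :
    Tendsto (fun i => (gridIndex₂ (M i) a b (t i) : ℝ) * t i) l (𝓝 b) := by
  have haμ : a < μ := by linarith
  have hmin := (tendsto_natFloor_div_mul ht tendsto_const_nhds hb).min
    ((tendsto_gridIndex₁_mul ht hM haμ).sub (tendsto_nhds_of_tendsto_nhdsWithin ht))
  rw [sub_zero, min_eq_left (by linarith)] at hmin
  refine hmin.congr' ?_
  filter_upwards [ht self_mem_nhdsWithin,
    (tendsto_gridIndex₁_atTop ht hM haμ).eventually_ge_atTop 1] with i hi hk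
  rw [gridIndex₂, Nat.cast_min, Nat.cast_sub hk, min_mul_of_nonneg _ _ hi.le, Nat.cast_one,
    sub_one_mul]

end GridIndices

theorem tendsto_div_nhdsGT_zero_of_tendsto_div {α : Type*} {l : Filter α} {p m s : α → ℕ}
    {μ : ℝ} (hμ : μ ≠ 0) (hs : ∀ i, 0 < s i)
    (hM : Tendsto (fun i => (m i : ℝ) / p i) l (𝓝 μ))
    (hstep : Tendsto (fun i => (s i : ℝ) / m i) l (𝓝 0)) :
    Tendsto (fun i => (s i : ℝ) / p i) l (𝓝[>] 0) := by
  have hmp : ∀ᶠ i in l, (m i : ℝ) ≠ 0 ∧ (p i : ℝ) ≠ 0 := by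
    filter_upwards [hM.eventually_ne hμ] with i hi using div_ne_zero_iff.1 hi
  refine tendsto_nhdsWithin_of_tendsto_nhds_of_eventually_within _ ?_ ?_
  · have h := hstep.mul hM
    rw [zero_mul] at h
    refine h.congr' ?_
    filter_upwards [hmp] with i hi using div_mul_div_cancel₀ hi.1
  · filter_upwards [hmp] with i hi
    exact div_pos (Nat.cast_pos.2 (hs i)) ((Nat.cast_nonneg _).lt_of_ne' hi.2)

theorem one_step_grid_space_filling_general (p m s : ℕ → ℕ)
    (hs : ∀ n, 0 < s n)
    (γ : ℝ)
    (hratio : Tendsto (fun n => (p n : ℝ) / (m n : ℝ)) atTop (nhds γ))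
    (hstep : Tendsto (fun n => (s n : ℝ) / (m n : ℝ)) atTop (nhds 0))
    (K : ℕ → ℕ) (hK : ∀ n, K n = (⌈(m n : ℝ) / (s n : ℝ) - 2⌉).toNat)
    (ζ₁ ζ₂ : ℝ) (hζ₁ : 0 < ζ₁) (hζ₂ : 0 < ζ₂)
    (hcon : 1 / ζ₁ + 1 / ζ₂ ≤ 1 / γ) :
    ∃ k₁ k₂ : ℕ → ℕ,
      (∀ᶠ n in atTop, 2 ≤ k₁ n ∧ k₁ n ≤ K n ∧ 1 ≤ k₂ n ∧ k₂ n ≤ k₁ n - 1) ∧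
      Tendsto (fun n => (p n : ℝ) / ((m n : ℝ) - (k₁ n : ℝ) * (s n : ℝ))) atTop (nhds ζ₁) ∧
      Tendsto (fun n => (p n : ℝ) / ((k₂ n : ℝ) * (s n : ℝ))) atTop (nhds ζ₂) := by
  simp only [one_div] at hcon
  have hγ : ζ₁⁻¹ < γ⁻¹ := by linarith [inv_pos.2 hζ₂]
  have hγ₀ : γ ≠ 0 := (inv_pos.1 ((inv_pos.2 hζ₁).trans hγ)).ne'
  have hM : Tendsto (fun n => (m n : ℝ) / p n) atTop (𝓝 γ⁻¹) :=
    tendsto_div_of_tendsto_div_inv (inv_ne_zero hγ₀) (by rwa [inv_inv])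
  have ht := tendsto_div_nhdsGT_zero_of_tendsto_div (inv_ne_zero hγ₀) hs hM hstep
  refine ⟨fun n => gridIndex₁ (m n / p n) ζ₁⁻¹ (s n / p n),
    fun n => gridIndex₂ (m n / p n) ζ₁⁻¹ ζ₂⁻¹ (s n / p n), ?_, ?_, ?_⟩
  · filter_upwards [(tendsto_gridIndex₁_atTop ht hM hγ).eventually_ge_atTop 2,
      eventually_gridIndex₁_le_ceil ht (inv_pos.2 hζ₁), hratio.eventually_ne hγ₀,
      eventually_one_le_gridIndex₂ ht hM hγ (inv_pos.2 hζ₂)] with n h₁ hK₁ hpm h₂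
    rw [div_div_div_cancel_right₀ (div_ne_zero_iff.1 hpm).1] at hK₁
    exact ⟨h₁, by rwa [hK, Int.ceil_toNat], h₂, min_le_right _ _⟩
  · refine tendsto_div_of_tendsto_div_inv hζ₁.ne'
      ((tendsto_sub_gridIndex₁_mul ht hM hγ).congr fun n => ?_)
    rw [sub_div, mul_div_assoc]
  · refine tendsto_div_of_tendsto_div_inv hζ₂.ne'
      ((tendsto_gridIndex₂_mul ht hM (inv_pos.2 hζ₂) hcon).congr fun n => ?_)
    rw [mul_div_assoc]

/-- **Space-filling property of the one-step subsampling grid.**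
Let `(pₙ), (mₙ), (sₙ)` be positive integers with `sₙ ≤ mₙ`, `pₙ/mₙ → γ ∈ (0, ∞)` and
`sₙ/mₙ → 0`. Let `ζ₁, ζ₂ ∈ (0, ∞)` satisfy `1/ζ₁ + 1/ζ₂ ≤ 1/γ`. Then there are index
sequences `k₁(n), k₂(n)` that are eventually admissible, i.e.
`2 ≤ k₁(n) ≤ Kₙ = ⌈mₙ/sₙ − 2⌉` and `1 ≤ k₂(n) ≤ k₁(n) − 1`, with
`pₙ/(mₙ − k₁(n)·sₙ) → ζ₁` and `pₙ/(k₂(n)·sₙ) → ζ₂`. -/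
theorem one_step_grid_space_filling (p m s : ℕ → ℕ)
    (hp : ∀ n, 0 < p n) (hs : ∀ n, 0 < s n) (hsm : ∀ n, s n ≤ m n)
    (γ : ℝ) (hγ : 0 < γ)
    (hratio : Tendsto (fun n => (p n : ℝ) / (m n : ℝ)) atTop (nhds γ))
    (hstep : Tendsto (fun n => (s n : ℝ) / (m n : ℝ)) atTop (nhds 0))
    (K : ℕ → ℕ) (hK : ∀ n, K n = (⌈(m n : ℝ) / (s n : ℝ) - 2⌉).toNat)
    (ζ₁ ζ₂ : ℝ) (hζ₁ : 0 < ζ₁) (hζ₂ : 0 < ζ₂)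
    (hcon : 1 / ζ₁ + 1 / ζ₂ ≤ 1 / γ) :
    ∃ k₁ k₂ : ℕ → ℕ,
      (∀ᶠ n in atTop, 2 ≤ k₁ n ∧ k₁ n ≤ K n ∧ 1 ≤ k₂ n ∧ k₂ n ≤ k₁ n - 1) ∧
      Tendsto (fun n => (p n : ℝ) / ((m n : ℝ) - (k₁ n : ℝ) * (s n : ℝ))) atTop (nhds ζ₁) ∧
      Tendsto (fun n => (p n : ℝ) / ((k₂ n : ℝ) * (s n : ℝ))) atTop (nhds ζ₂) :=
  one_step_grid_space_filling_general p m s hs γ hratio hstep K hK ζ₁ ζ₂ hζ₁ hζ₂ hcon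
end

section
/- Let γ ∈ (1, ∞) and define f : (0, ∞) → ℝ by f(x) = 1/x − γ ∫ r/(x·r + 1) dP(r). Then: (i) there exists a unique x₀ ∈ (0, ∞) with f(x₀) = 0; (ii) f is strictly decreasing on (0, x₀]; and (iii) f(x) → +∞ as x → 0⁺. -/
open Filter MeasureTheory Set Topology

/-! With `R(x) = ∫ 1/(x r + 1) dP(r)`, the identity `x · r/(x r + 1) = 1 - 1/(x r + 1)` gives
`x f(x) = g(x) := 1 - γ + γ R(x)`. Since `P` lives on `(0, ∞)`, `R` is continuous and strictly
decreasing on `[0, ∞)` with `R 0 = 1` and `R x → 0` at infinity, so `g` falls strictly from `1` to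
`1 - γ < 0` and has exactly one zero `x₀`. On `(0, x₀]` the function `f = g · x⁻¹` is a product of a
nonnegative decreasing and a positive strictly decreasing factor, and near `0⁺` it behaves like
`x⁻¹`. -/

lemma integral_pos_of_ae_pos {α : Type*} [MeasurableSpace α] {μ : Measure α} [NeZero μ]
    {f : α → ℝ} (hf : ∀ᵐ x ∂μ, 0 < f x) (hfi : Integrable f μ) : 0 < ∫ x, f x ∂μ := by
  rw [integral_pos_iff_support_of_nonneg_ae (hf.mono fun _ hx => hx.le) hfi]
  exact (Measure.measure_univ_pos.2 (NeZero.ne μ)).trans_le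
    (measure_mono_ae (hf.mono fun _ hx _ => hx.ne'))

/-- Equals `x⁻¹ m_P(-x⁻¹)`, where `m_P(z) = ∫ 1/(r - z) dP(r)` is the Stieltjes transform. -/
noncomputable def resolventMean (P : Measure ℝ) (x : ℝ) : ℝ :=
  ∫ r, 1 / (x * r + 1) ∂P

section ResolventMean

variable {P : Measure ℝ} {x : ℝ}

lemma one_le_mul_add_one {x r : ℝ} (hx : 0 ≤ x) (hr : 0 ≤ r) : 1 ≤ x * r + 1 :=
  le_add_of_nonneg_left (mul_nonneg hx hr)

lemma norm_one_div_mul_add_one_le_one {x r : ℝ} (hx : 0 ≤ x) (hr : 0 ≤ r) :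
    ‖1 / (x * r + 1)‖ ≤ 1 := by
  have := one_le_mul_add_one hx hr
  rw [Real.norm_of_nonneg (by positivity)]
  exact div_le_one_of_le₀ this (by positivity)

lemma integrable_one_div_mul_add_one [IsFiniteMeasure P] (hP : ∀ᵐ r ∂P, 0 ≤ r) (hx : 0 ≤ x) :
    Integrable (fun r => 1 / (x * r + 1)) P :=
  (integrable_const (1 : ℝ)).mono'
    (measurable_const.div ((measurable_id.const_mul x).add_const 1)).aestronglyMeasurable
    (hP.mono fun _ hr => norm_one_div_mul_add_one_le_one hx hr)

@[simp]
lemma resolventMean_zero [IsProbabilityMeasure P] : resolventMean P 0 = 1 := by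
  simp [resolventMean]

lemma integral_div_mul_add_one [IsProbabilityMeasure P] (hP : ∀ᵐ r ∂P, 0 ≤ r) (hx : 0 < x) :
    ∫ r, r / (x * r + 1) ∂P = (1 - resolventMean P x) / x := by
  have hpointwise : (fun r => r / (x * r + 1)) =ᵐ[P] fun r => (1 - 1 / (x * r + 1)) / x := by
    filter_upwards [hP] with r hr
    have := one_le_mul_add_one hx.le hr
    field_simp
    ring
  rw [integral_congr_ae hpointwise, integral_div,
    integral_sub (integrable_const 1) (integrable_one_div_mul_add_one hP hx.le)]
  simp [resolventMean]

lemma continuousOn_resolventMean [IsFiniteMeasure P] (hP : ∀ᵐ r ∂P, 0 ≤ r) :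
    ContinuousOn (resolventMean P) (Ici 0) := by
  refine continuousOn_of_dominated
    (fun x hx => (integrable_one_div_mul_add_one hP hx).aestronglyMeasurable)
    (fun x hx => hP.mono fun r hr => norm_one_div_mul_add_one_le_one hx hr)
    (integrable_const 1) (hP.mono fun r hr => ?_)
  refine ContinuousOn.div continuousOn_const (by fun_prop) fun x hx => ?_
  exact (zero_lt_one.trans_le (one_le_mul_add_one hx hr)).ne'

lemma strictAntiOn_resolventMean [IsFiniteMeasure P] [NeZero P] (hP : ∀ᵐ r ∂P, 0 < r) :
    StrictAntiOn (resolventMean P) (Ici 0) := by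
  have hP' : ∀ᵐ r ∂P, 0 ≤ r := hP.mono fun _ hr => hr.le
  intro x hx y hy hxy
  rw [← sub_pos, resolventMean, resolventMean,
    ← integral_sub (integrable_one_div_mul_add_one hP' hx) (integrable_one_div_mul_add_one hP' hy)]
  refine integral_pos_of_ae_pos (hP.mono fun r hr => ?_)
    ((integrable_one_div_mul_add_one hP' hx).sub (integrable_one_div_mul_add_one hP' hy))
  have hxr := one_le_mul_add_one hx hr.le
  rw [sub_pos]
  exact one_div_lt_one_div_of_lt (by positivity) (by gcongr)

lemma tendsto_resolventMean_atTop [IsFiniteMeasure P] (hP : ∀ᵐ r ∂P, 0 < r) :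
    Tendsto (resolventMean P) atTop (𝓝 0) := by
  have hP' : ∀ᵐ r ∂P, 0 ≤ r := hP.mono fun _ hr => hr.le
  have hlim := tendsto_integral_filter_of_dominated_convergence (μ := P) (l := atTop)
    (F := fun x r => 1 / (x * r + 1)) (f := fun _ => 0) (fun _ => 1)
    ((eventually_ge_atTop 0).mono fun x hx => (integrable_one_div_mul_add_one hP' hx).1)
    ((eventually_ge_atTop 0).mono fun x hx =>
      hP'.mono fun r hr => norm_one_div_mul_add_one_le_one hx hr)
    (integrable_const 1) (hP.mono fun r hr => ?_)
  · rwa [integral_zero] at hlim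
  · simp only [one_div]
    exact (tendsto_atTop_add_const_right _ 1 (tendsto_id.atTop_mul_const hr)).inv_tendsto_atTop

end ResolventMean

lemma existsUnique_zero_of_strictAntiOn {g : ℝ → ℝ} {c : ℝ} (hcont : ContinuousOn g (Ici c))
    (hanti : StrictAntiOn g (Ici c)) (hc : 0 < g c) (hneg : ∀ᶠ x in atTop, g x < 0) :
    ∃! x, x ∈ Ioi c ∧ g x = 0 := by
  obtain ⟨d, hgd, hcd⟩ := (hneg.and (eventually_ge_atTop c)).exists
  obtain ⟨x, hx, hgx⟩ := intermediate_value_Icc' hcd (hcont.mono Icc_subset_Ici_self)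
    ⟨hgd.le, hc.le⟩
  have hcx : c < x := hx.1.lt_of_ne (by rintro rfl; exact hc.ne' hgx)
  refine ⟨x, ⟨hcx, hgx⟩, fun y ⟨hy, hgy⟩ => ?_⟩
  exact hanti.injOn (mem_Ici.2 hy.le) (mem_Ici.2 hcx.le) (hgy.trans hgx.symm)

lemma StrictAntiOn.div_id {g : ℝ → ℝ} {s : Set ℝ} (hg : StrictAntiOn g s) (hs : s ⊆ Ioi 0)
    (hg_nonneg : ∀ x ∈ s, 0 ≤ g x) : StrictAntiOn (fun x => g x / x) s := by
  intro x hx y hy hxy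
  have hx0 : 0 < x := hs hx
  calc g y / y ≤ g y / x := div_le_div_of_nonneg_left (hg_nonneg y hy) hx0 hxy.le
    _ < g x / x := div_lt_div_of_pos_right (hg hx hy hxy) hx0

theorem ridgeless_fixed_point_function_properties_general (a b : ℝ) (ha : 0 < a)
    (P : Measure ℝ) [IsProbabilityMeasure P] (hsupp : ∀ᵐ r ∂P, r ∈ Set.Icc a b)
    (γ : ℝ) (hγ : 1 < γ)
    (f : ℝ → ℝ)
    (hf : ∀ x ∈ Set.Ioi (0 : ℝ), f x = 1 / x - γ * ∫ r, r / (x * r + 1) ∂P) :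
    (∃! x₀, x₀ ∈ Set.Ioi (0 : ℝ) ∧ f x₀ = 0) ∧
    (∀ x₀ ∈ Set.Ioi (0 : ℝ), f x₀ = 0 → StrictAntiOn f (Set.Ioc 0 x₀)) ∧
    Tendsto f (nhdsWithin 0 (Set.Ioi 0)) atTop := by
  have hP : ∀ᵐ r ∂P, 0 < r := hsupp.mono fun r hr => ha.trans_le hr.1
  have hP' : ∀ᵐ r ∂P, 0 ≤ r := hP.mono fun _ hr => hr.le
  set g : ℝ → ℝ := fun x => 1 - γ + γ * resolventMean P x
  have hfg : EqOn f (fun x => g x / x) (Ioi 0) := fun x hx => by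
    rw [hf x hx, integral_div_mul_add_one hP' hx]
    field_simp
    ring
  have hg_cont : ContinuousOn g (Ici 0) :=
    continuousOn_const.add (continuousOn_const.mul (continuousOn_resolventMean hP'))
  have hg_anti : StrictAntiOn g (Ici 0) := fun x hx y hy hxy => by
    simpa [g] using mul_lt_mul_of_pos_left (strictAntiOn_resolventMean hP hx hy hxy)
      (by linarith : 0 < γ)
  have hg_neg : ∀ᶠ x in atTop, g x < 0 :=
    (((tendsto_resolventMean_atTop hP).const_mul γ).const_add (1 - γ)).eventually
      (gt_mem_nhds (by linarith))
  refine ⟨?_, fun x₀ hx₀ hfx₀ => ?_, ?_⟩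
  · refine (existsUnique_congr fun x => and_congr_right fun hx => ?_).2
      (existsUnique_zero_of_strictAntiOn hg_cont hg_anti (by simp [g]) hg_neg)
    rw [hfg hx, div_eq_zero_iff, or_iff_left (ne_of_gt hx)]
  · have hgx₀ : g x₀ = 0 := by rwa [hfg hx₀, div_eq_zero_iff, or_iff_left (ne_of_gt hx₀)] at hfx₀
    refine (StrictAntiOn.div_id (hg_anti.mono fun x hx => le_of_lt hx.1) Ioc_subset_Ioi_self
      fun x hx => ?_).congr (hfg.mono Ioc_subset_Ioi_self).symm
    exact hgx₀.ge.trans (hg_anti.antitoneOn (mem_Ici.2 hx.1.le) (mem_Ici.2 hx₀.le) hx.2)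
  · have hg_zero : Tendsto g (𝓝[>] 0) (𝓝 1) := by
      have := (hg_cont.continuousWithinAt self_mem_Ici).mono (Ioi_subset_Ici_self (a := 0))
      rwa [ContinuousWithinAt, show g 0 = 1 by simp [g]] at this
    refine (hg_zero.pos_mul_atTop one_pos tendsto_inv_nhdsGT_zero).congr' ?_
    filter_upwards [self_mem_nhdsWithin] with x hx
    exact (div_eq_mul_inv _ _).symm.trans (hfg hx).symm

/-- **Properties of the fixed-point function for the ridgeless risk.**
Let `0 < a ≤ b`, `P` a probability measure supported in `[a, b]`, `γ ∈ (1, ∞)`, and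
`f(x) = 1/x − γ ∫ r/(x·r + 1) dP(r)` for `x ∈ (0, ∞)`. Then:
(i) there is a unique `x₀ ∈ (0, ∞)` with `f x₀ = 0`;
(ii) `f` is strictly decreasing on `(0, x₀]`; and
(iii) `f(x) → +∞` as `x → 0⁺`. -/
theorem ridgeless_fixed_point_function_properties (a b : ℝ) (ha : 0 < a) (hab : a ≤ b)
    (P : Measure ℝ) [IsProbabilityMeasure P] (hsupp : ∀ᵐ r ∂P, r ∈ Set.Icc a b)
    (γ : ℝ) (hγ : 1 < γ)
    (f : ℝ → ℝ)
    (hf : ∀ x ∈ Set.Ioi (0 : ℝ), f x = 1 / x - γ * ∫ r, r / (x * r + 1) ∂P) :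
    (∃! x₀, x₀ ∈ Set.Ioi (0 : ℝ) ∧ f x₀ = 0) ∧
    (∀ x₀ ∈ Set.Ioi (0 : ℝ), f x₀ = 0 → StrictAntiOn f (Set.Ioc 0 x₀)) ∧
    Tendsto f (nhdsWithin 0 (Set.Ioi 0)) atTop :=
  ridgeless_fixed_point_function_properties_general a b ha P hsupp γ hγ f hf
end

section
/- Let Q be a probability measure on ℝ supported in [a, b]. With ṽ_g(φ) = ṽ(φ)·φ ∫ r²/(1 + v(φ)·r)² dP(r) and ṽ(φ) = (1/v(φ)² − φ ∫ r²/(1 + v(φ)·r)² dP(r))⁻¹, define Υ(φ) = (1 + ṽ_g(φ)) · ∫ 1/(1 + v(φ)·r)² dQ(r) for φ ∈ (1, ∞). Then Υ is continuous and finite on (1, ∞), and Υ(φ) → 1 as φ → ∞. -/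
open Filter MeasureTheory Set Topology

/-!
Put `t = v r / (1 + v r) ∈ (0, 1)`, so that `v² ∫ r²/(1 + v r)² dP = ∫ t² dP` and `∫ t dP = 1/φ`.
Then `1 + ṽ_g = 1 / (1 - φ ∫ t² dP)`, and `φ ∫ t² dP < φ ∫ t dP = 1` keeps the denominator
positive. As `v` inverts the strictly increasing map `c ↦ ∫ c r/(1 + c r) dP` at `1/φ`, it
is continuous and `v(φ) → 0`; finally `φ ∫ t² dP ≤ b v(φ) → 0` (as `t ≤ v b`) and
`∫ 1/(1 + v r)² dQ → 1`.
-/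

theorem StrictMonoOn.tendsto_of_tendsto_comp {α β γ : Type*} [LinearOrder α] [TopologicalSpace α]
    [OrderTopology α] [LinearOrder β] [TopologicalSpace β] [OrderClosedTopology β]
    {g : α → β} {s : Set α} (hg : StrictMonoOn g s) (hs : s.OrdConnected)
    {v : γ → α} {F : Filter γ} {x : α} (hx : x ∈ s) (hvs : ∀ᶠ y in F, v y ∈ s)
    (hgv : Tendsto (fun y => g (v y)) F (𝓝 (g x))) : Tendsto v F (𝓝 x) := by
  refine tendsto_order.2 ⟨fun l hl => ?_, fun u hu => ?_⟩
  · by_cases hls : l ∈ s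
    · filter_upwards [hgv.eventually_const_lt (hg hls hx hl), hvs] with y hy hys
      exact (hg.lt_iff_lt hls hys).1 hy
    · filter_upwards [hvs] with y hys
      by_contra! hyl
      exact hls (hs.out hys hx ⟨hyl, hl.le⟩)
  · by_cases hus : u ∈ s
    · filter_upwards [hgv.eventually_lt_const (hg hx hus hu), hvs] with y hy hys
      exact (hg.lt_iff_lt hys hus).1 hy
    · filter_upwards [hvs] with y hys
      by_contra! hyu
      exact hus (hs.out hx hys ⟨hu.le, hyu⟩)

theorem MeasureTheory.integral_lt_integral_of_ae_lt {α : Type*} [MeasurableSpace α] {μ : Measure α}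
    [NeZero μ] {f g : α → ℝ} (hf : Integrable f μ) (hg : Integrable g μ)
    (hfg : ∀ᵐ x ∂μ, f x < g x) : ∫ x, f x ∂μ < ∫ x, g x ∂μ := by
  have hpos : 0 < ∫ x, (g - f) x ∂μ := by
    refine (integral_pos_iff_support_of_nonneg_ae (hfg.mono fun x hx => (sub_pos.2 hx).le)
      (hg.sub hf)).2 (pos_iff_ne_zero.2 fun h0 => ?_)
    have hzero : ∀ᵐ x ∂μ, (g - f) x = 0 := ae_iff.2 h0
    obtain ⟨x, hx, hx0⟩ := (hfg.and hzero).exists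
    simp only [Pi.sub_apply, sub_eq_zero] at hx0
    exact hx.ne' hx0
  rw [Pi.sub_def, integral_sub hg hf] at hpos
  linarith

namespace ResolventIntegral

lemma mul_div_one_add_mul_mem_Ico {c r : ℝ} (hc : 0 ≤ c) (hr : 0 ≤ r) :
    c * r / (1 + c * r) ∈ Ico 0 1 := by
  have hcr : 0 ≤ c * r := mul_nonneg hc hr
  exact ⟨by positivity, (div_lt_one (by linarith)).2 (by linarith)⟩

lemma mul_div_one_add_mul_le {c r : ℝ} (hc : 0 ≤ c) (hr : 0 ≤ r) :
    c * r / (1 + c * r) ≤ c * r :=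
  div_le_self (mul_nonneg hc hr) (by nlinarith [mul_nonneg hc hr])

variable {μ : Measure ℝ}

lemma sq_mul_integral_sq_div_sq (c : ℝ) :
    c ^ 2 * ∫ r, r ^ 2 / (1 + c * r) ^ 2 ∂μ = ∫ r, (c * r / (1 + c * r)) ^ 2 ∂μ := by
  rw [← integral_const_mul]
  congr 1 with r
  rw [div_pow, mul_pow, mul_div_assoc]

section IntegralBounds

variable [IsFiniteMeasure μ]

lemma integrable_pow_mul_div_one_add_mul (n : ℕ) {c : ℝ} (hc : 0 ≤ c) (hμ : ∀ᵐ r ∂μ, 0 ≤ r) :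
    Integrable (fun r => (c * r / (1 + c * r)) ^ n) μ := by
  refine .of_bound (Measurable.aestronglyMeasurable (by fun_prop)) 1 (hμ.mono fun r hr => ?_)
  obtain ⟨h0, h1⟩ := mul_div_one_add_mul_mem_Ico hc hr
  rw [Real.norm_eq_abs, abs_of_nonneg (by positivity)]
  exact pow_le_one₀ h0 h1.le

lemma continuousOn_integral_div_one_add_mul_sq {h : ℝ → ℝ} (hh : Measurable h) {C : ℝ}
    (hC : ∀ᵐ r ∂μ, |h r| ≤ C) (hμ : ∀ᵐ r ∂μ, 0 ≤ r) :
    ContinuousOn (fun c => ∫ r, h r / (1 + c * r) ^ 2 ∂μ) (Ici 0) := by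
  refine continuousOn_of_dominated (bound := fun _ => C)
    (fun c _ => (hh.div (by fun_prop)).aestronglyMeasurable) (fun c hc => ?_) (integrable_const C)
    (hμ.mono fun r hr => continuousOn_const.div (by fun_prop) fun c hc => ?_)
  · filter_upwards [hC, hμ] with r hCr hr
    have hcr := mul_nonneg (mem_Ici.1 hc) hr
    have h1 : 1 ≤ (1 + c * r) ^ 2 := one_le_pow₀ (by linarith)
    rw [norm_div, Real.norm_of_nonneg (sq_nonneg (1 + c * r)), Real.norm_eq_abs]
    exact (div_le_self (abs_nonneg _) h1).trans hCr
  · have := mul_nonneg (mem_Ici.1 hc) hr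
    positivity

lemma continuousOn_integral_sq_div_one_add_mul_sq {b : ℝ} (hμ : ∀ᵐ r ∂μ, r ∈ Icc 0 b) :
    ContinuousOn (fun c => ∫ r, r ^ 2 / (1 + c * r) ^ 2 ∂μ) (Ici 0) :=
  continuousOn_integral_div_one_add_mul_sq (measurable_id.pow_const 2) (C := b ^ 2)
    (hμ.mono fun r hr => by rw [abs_sq]; exact pow_le_pow_left₀ hr.1 hr.2 2)
    (hμ.mono fun r hr => hr.1)

lemma integral_sq_le_mul_integral {b c : ℝ} (hc : 0 ≤ c) (hμ : ∀ᵐ r ∂μ, r ∈ Icc 0 b) :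
    ∫ r, (c * r / (1 + c * r)) ^ 2 ∂μ ≤ c * b * ∫ r, c * r / (1 + c * r) ∂μ := by
  have hμ0 := hμ.mono fun r hr => hr.1
  rw [← integral_const_mul]
  refine integral_mono_ae (integrable_pow_mul_div_one_add_mul 2 hc hμ0)
    (Integrable.const_mul (by simpa using integrable_pow_mul_div_one_add_mul 1 hc hμ0) _)
    (hμ.mono fun r hr => ?_)
  obtain ⟨h0, _⟩ := mul_div_one_add_mul_mem_Ico hc hr.1
  have hle : c * r / (1 + c * r) ≤ c * b :=
    (mul_div_one_add_mul_le hc hr.1).trans (mul_le_mul_of_nonneg_left hr.2 hc)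
  dsimp only
  rw [sq]
  exact mul_le_mul_of_nonneg_right hle h0

variable [NeZero μ]

lemma strictMonoOn_integral_mul_div_one_add_mul (hμ : ∀ᵐ r ∂μ, 0 < r) :
    StrictMonoOn (fun c => ∫ r, c * r / (1 + c * r) ∂μ) (Ici 0) := by
  intro c hc d hd hcd
  have hint (e : ℝ) (he : 0 ≤ e) : Integrable (fun r => e * r / (1 + e * r)) μ := by
    simpa using integrable_pow_mul_div_one_add_mul 1 he (hμ.mono fun r hr => hr.le)
  refine integral_lt_integral_of_ae_lt (hint c hc) (hint d hd) (hμ.mono fun r hr => ?_)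
  have hcr : 0 ≤ c * r := mul_nonneg hc hr.le
  rw [div_lt_div_iff₀ (by linarith) (by nlinarith)]
  nlinarith

lemma integral_sq_lt_integral {c : ℝ} (hc : 0 < c) (hμ : ∀ᵐ r ∂μ, 0 < r) :
    ∫ r, (c * r / (1 + c * r)) ^ 2 ∂μ < ∫ r, c * r / (1 + c * r) ∂μ := by
  have hμ0 := hμ.mono fun r hr => hr.le
  refine integral_lt_integral_of_ae_lt (integrable_pow_mul_div_one_add_mul 2 hc.le hμ0)
    (by simpa using integrable_pow_mul_div_one_add_mul 1 hc.le hμ0) (hμ.mono fun r hr => ?_)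
  obtain ⟨_, h1⟩ := mul_div_one_add_mul_mem_Ico hc.le hr.le
  have h0 : 0 < c * r / (1 + c * r) := by have := mul_pos hc hr; positivity
  nlinarith

end IntegralBounds

section FixedPoint

variable [IsFiniteMeasure μ] {v : ℝ → ℝ}
  (hv : ∀ φ ∈ Ioi (1 : ℝ), 0 < v φ ∧ 1 / φ = ∫ r, v φ * r / (1 + v φ * r) ∂μ)
include hv

lemma sq_mul_mul_integral_le {b φ : ℝ} (hφ : φ ∈ Ioi 1) (hμ : ∀ᵐ r ∂μ, r ∈ Icc 0 b) :
    v φ ^ 2 * (φ * ∫ r, r ^ 2 / (1 + v φ * r) ^ 2 ∂μ) ≤ b * v φ := by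
  have hφ0 : (0 : ℝ) < φ := zero_lt_one.trans hφ
  have h := integral_sq_le_mul_integral (hv φ hφ).1.le hμ
  rw [← sq_mul_integral_sq_div_sq, ← (hv φ hφ).2, mul_one_div, le_div_iff₀ hφ0] at h
  linarith

variable [NeZero μ] (hμ : ∀ᵐ r ∂μ, 0 < r)
include hμ

lemma sq_mul_mul_integral_lt_one {φ : ℝ} (hφ : φ ∈ Ioi 1) :
    v φ ^ 2 * (φ * ∫ r, r ^ 2 / (1 + v φ * r) ^ 2 ∂μ) < 1 := by
  have hφ0 : (0 : ℝ) < φ := zero_lt_one.trans hφ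
  have h := integral_sq_lt_integral (hv φ hφ).1 hμ
  rw [← sq_mul_integral_sq_div_sq, ← (hv φ hφ).2, lt_div_iff₀ hφ0] at h
  linarith

lemma continuousOn_of_fixedPoint : ContinuousOn v (Ioi 1) := by
  intro φ hφ
  have hφ0 : φ ≠ 0 := (zero_lt_one.trans hφ).ne'
  refine (strictMonoOn_integral_mul_div_one_add_mul hμ).tendsto_of_tendsto_comp ordConnected_Ici
    (hv φ hφ).1.le (eventually_mem_nhdsWithin.mono fun ψ hψ => (hv ψ hψ).1.le) ?_
  rw [← (hv φ hφ).2]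
  exact ((continuousAt_const.div continuousAt_id hφ0).tendsto.mono_left nhdsWithin_le_nhds).congr'
    (eventually_mem_nhdsWithin.mono fun ψ hψ => (hv ψ hψ).2)

lemma tendsto_zero_of_fixedPoint : Tendsto v atTop (𝓝 0) := by
  refine (strictMonoOn_integral_mul_div_one_add_mul hμ).tendsto_of_tendsto_comp ordConnected_Ici
    self_mem_Ici ((eventually_gt_atTop 1).mono fun φ hφ => (hv φ hφ).1.le) ?_
  simp only [zero_mul, zero_div, integral_zero]
  exact (tendsto_const_nhds.div_atTop tendsto_id).congr'
    ((eventually_gt_atTop 1).mono fun φ hφ => (hv φ hφ).2)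

lemma tendsto_sq_mul_mul_integral_zero {b : ℝ} (hμb : ∀ᵐ r ∂μ, r ∈ Icc 0 b) :
    Tendsto (fun φ => v φ ^ 2 * (φ * ∫ r, r ^ 2 / (1 + v φ * r) ^ 2 ∂μ)) atTop (𝓝 0) := by
  refine tendsto_of_tendsto_of_tendsto_of_le_of_le' tendsto_const_nhds
    (by simpa using (tendsto_zero_of_fixedPoint hv hμ).const_mul b) ?_ ?_
  all_goals filter_upwards [eventually_gt_atTop 1] with φ hφ
  · have hφ0 : (0 : ℝ) ≤ φ := zero_le_one.trans hφ.le
    have hI : 0 ≤ ∫ r, r ^ 2 / (1 + v φ * r) ^ 2 ∂μ := integral_nonneg fun r => by positivity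
    positivity
  · exact sq_mul_mul_integral_le hv hφ hμb

end FixedPoint

end ResolventIntegral

lemma one_add_inv_sub_mul_mul_eq_div {c x : ℝ} (hc : c ≠ 0) (hx : 1 - c ^ 2 * x ≠ 0) (y : ℝ) :
    (1 + (1 / c ^ 2 - x)⁻¹ * x) * y = y / (1 - c ^ 2 * x) := by
  have : 1 / c ^ 2 - x = (1 - c ^ 2 * x) / c ^ 2 := by field_simp
  rw [this]
  field_simp
  ring

open ResolventIntegral

theorem bias_multiplier_properties_general (a b : ℝ) (ha : 0 < a)
    (P : Measure ℝ) [IsProbabilityMeasure P] (hPsupp : ∀ᵐ r ∂P, r ∈ Set.Icc a b)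
    (Q : Measure ℝ) [IsProbabilityMeasure Q] (hQsupp : ∀ᵐ r ∂Q, r ∈ Set.Icc a b)
    (v : ℝ → ℝ)
    (hv : ∀ φ ∈ Set.Ioi (1 : ℝ),
      0 < v φ ∧ 1 / φ = ∫ r, v φ * r / (1 + v φ * r) ∂P)
    (tv tvg Υ : ℝ → ℝ)
    (htv : ∀ φ ∈ Set.Ioi (1 : ℝ),
      tv φ = (1 / (v φ) ^ 2 - φ * ∫ r, r ^ 2 / (1 + v φ * r) ^ 2 ∂P)⁻¹)
    (htvg : ∀ φ ∈ Set.Ioi (1 : ℝ),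
      tvg φ = tv φ * (φ * ∫ r, r ^ 2 / (1 + v φ * r) ^ 2 ∂P))
    (hΥ : ∀ φ ∈ Set.Ioi (1 : ℝ),
      Υ φ = (1 + tvg φ) * ∫ r, 1 / (1 + v φ * r) ^ 2 ∂Q) :
    ContinuousOn Υ (Set.Ioi 1) ∧ Tendsto Υ atTop (nhds 1) := by
  have hP : ∀ᵐ r ∂P, r ∈ Icc 0 b := hPsupp.mono fun r hr => ⟨ha.le.trans hr.1, hr.2⟩
  have hP0 : ∀ᵐ r ∂P, 0 < r := hPsupp.mono fun r hr => ha.trans_le hr.1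
  have hQ0 : ∀ᵐ r ∂Q, 0 ≤ r := hQsupp.mono fun r hr => ha.le.trans hr.1
  set D := fun φ => v φ ^ 2 * (φ * ∫ r, r ^ 2 / (1 + v φ * r) ^ 2 ∂P)
  set J := fun c => ∫ r, 1 / (1 + c * r) ^ 2 ∂Q
  have hD1 (φ : ℝ) (hφ : φ ∈ Ioi 1) : 1 - D φ ≠ 0 :=
    (sub_pos.2 (sq_mul_mul_integral_lt_one hv hP0 hφ)).ne'
  have hΥD : EqOn Υ (fun φ => J (v φ) / (1 - D φ)) (Ioi 1) := fun φ hφ => by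
    rw [hΥ φ hφ, htvg φ hφ, htv φ hφ,
      one_add_inv_sub_mul_mul_eq_div (hv φ hφ).1.ne' (hD1 φ hφ)]
  have hvc := continuousOn_of_fixedPoint hv hP0
  have hv_nonneg : MapsTo v (Ioi 1) (Ici 0) := fun φ hφ => (hv φ hφ).1.le
  have hJc : ContinuousOn J (Ici 0) :=
    continuousOn_integral_div_one_add_mul_sq measurable_const (C := 1) (by simp) hQ0
  refine ⟨ContinuousOn.congr ?_ hΥD, ?_⟩
  · exact (hJc.comp hvc hv_nonneg).div (continuousOn_const.sub ((hvc.pow 2).mul (continuousOn_id.mul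
      ((continuousOn_integral_sq_div_one_add_mul_sq hP).comp hvc hv_nonneg)))) hD1
  have hv0 := tendsto_zero_of_fixedPoint hv hP0
  have hJ1 : Tendsto (fun φ => J (v φ)) atTop (𝓝 1) := by
    have := ((hJc 0 self_mem_Ici).tendsto.comp (tendsto_nhdsWithin_iff.2 ⟨hv0,
      (eventually_gt_atTop 1).mono fun φ hφ => hv_nonneg hφ⟩))
    simpa [J, Function.comp_def] using this
  have hD0 := tendsto_sq_mul_mul_integral_zero hv hP0 hP
  simpa using (hJ1.div (tendsto_const_nhds.sub hD0) (by norm_num)).congr'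
    ((eventually_gt_atTop 1).mono fun φ hφ => (hΥD hφ).symm)

/-- **Properties of the bias multiplier `Υ` of the one-step predictor.**
Let `0 < a ≤ b`, let `P` and `Q` be probability measures supported in `[a, b]`, and let
`v : (1, ∞) → ℝ` with `v φ > 0` be the unique solution of
`1/φ = ∫ v(φ)·r/(1 + v(φ)·r) dP(r)`. With
`ṽ(φ) = (1/v(φ)² − φ ∫ r²/(1 + v(φ)·r)² dP(r))⁻¹`,
`ṽ_g(φ) = ṽ(φ)·φ ∫ r²/(1 + v(φ)·r)² dP(r)`, and
`Υ(φ) = (1 + ṽ_g(φ)) ∫ 1/(1 + v(φ)·r)² dQ(r)`, the function `Υ` is continuous (and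
finite, being real-valued) on `(1, ∞)` and `Υ(φ) → 1` as `φ → ∞`. -/
theorem bias_multiplier_properties (a b : ℝ) (ha : 0 < a) (hab : a ≤ b)
    (P : Measure ℝ) [IsProbabilityMeasure P] (hPsupp : ∀ᵐ r ∂P, r ∈ Set.Icc a b)
    (Q : Measure ℝ) [IsProbabilityMeasure Q] (hQsupp : ∀ᵐ r ∂Q, r ∈ Set.Icc a b)
    (v : ℝ → ℝ)
    (hv : ∀ φ ∈ Set.Ioi (1 : ℝ),
      0 < v φ ∧ 1 / φ = ∫ r, v φ * r / (1 + v φ * r) ∂P)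
    (tv tvg Υ : ℝ → ℝ)
    (htv : ∀ φ ∈ Set.Ioi (1 : ℝ),
      tv φ = (1 / (v φ) ^ 2 - φ * ∫ r, r ^ 2 / (1 + v φ * r) ^ 2 ∂P)⁻¹)
    (htvg : ∀ φ ∈ Set.Ioi (1 : ℝ),
      tvg φ = tv φ * (φ * ∫ r, r ^ 2 / (1 + v φ * r) ^ 2 ∂P))
    (hΥ : ∀ φ ∈ Set.Ioi (1 : ℝ),
      Υ φ = (1 + tvg φ) * ∫ r, 1 / (1 + v φ * r) ^ 2 ∂Q) :
    ContinuousOn Υ (Set.Ioi 1) ∧ Tendsto Υ atTop (nhds 1) :=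
  bias_multiplier_properties_general a b ha P hPsupp Q hQsupp v hv tv tvg Υ htv htvg hΥ
end

section
/- Let s > 1. Then the minimum over x, y ∈ (1, ∞) of the composed value h(y; h(x; s)) equals 2·√(2√s − 1) − 1, and it is attained at x = √s/(√s − 1) and y = √(2√s − 1)/(√(2√s − 1) − 1). -/
/-!
Writing `s = r²`, one has the identity
`h(x; r²) − (2r − 1) = ((r − 1)(x − 1) − 1)² / (x(x − 1))`,
so on `x > 1` the risk `h(x; s)` is minimised exactly at `x = √s/(√s − 1)`, with value `2√s − 1`.
Since `h(y; ·)` is increasing for `y > 1`, the composed risk is minimised by first minimising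
the inner risk, to `2√s − 1`, and then the outer one, to `2√(2√s − 1) − 1`.
-/

open Filter Set

noncomputable def ridgelessRisk (x s : ℝ) : ℝ := s * (1 - 1 / x) + 1 / (x - 1)

lemma ridgelessRisk_monotone {x : ℝ} (hx : 1 < x) : Monotone (ridgelessRisk x) := by
  intro s s' hss'
  have hx' : 0 ≤ 1 - 1 / x := by
    rw [sub_nonneg, div_le_one (by linarith)]
    exact hx.le
  unfold ridgelessRisk
  gcongr

lemma ridgelessRisk_sq_sub_two_mul_sub_one (r : ℝ) {x : ℝ} (hx₀ : x ≠ 0) (hx₁ : x - 1 ≠ 0) :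
    ridgelessRisk x (r ^ 2) - (2 * r - 1) = ((r - 1) * (x - 1) - 1) ^ 2 / ((x - 1) * x) := by
  unfold ridgelessRisk
  field_simp
  ring

lemma two_mul_sub_one_le_ridgelessRisk_sq (r : ℝ) {x : ℝ} (hx : 1 < x) :
    2 * r - 1 ≤ ridgelessRisk x (r ^ 2) := by
  rw [← sub_nonneg, ridgelessRisk_sq_sub_two_mul_sub_one r (by linarith) (by linarith)]
  have : 0 < x - 1 := by linarith
  positivity

lemma ridgelessRisk_div_sub_one_sq {r : ℝ} (hr₀ : r ≠ 0) (hr₁ : r - 1 ≠ 0) :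
    ridgelessRisk (r / (r - 1)) (r ^ 2) = 2 * r - 1 := by
  have hx₁ : r / (r - 1) - 1 = 1 / (r - 1) := by
    field_simp
    ring
  unfold ridgelessRisk
  rw [hx₁]
  field_simp
  ring

lemma two_mul_sqrt_sub_one_le_ridgelessRisk {s x : ℝ} (hs : 0 ≤ s) (hx : 1 < x) :
    2 * √s - 1 ≤ ridgelessRisk x s := by
  simpa [Real.sq_sqrt hs] using two_mul_sub_one_le_ridgelessRisk_sq √s hx

lemma ridgelessRisk_sqrt_div_sqrt_sub_one {s : ℝ} (hs : 1 < s) :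
    ridgelessRisk (√s / (√s - 1)) s = 2 * √s - 1 := by
  have hr : 1 < √s := (Real.lt_sqrt zero_le_one).2 (by simpa using hs)
  simpa [Real.sq_sqrt (by linarith : 0 ≤ s)] using
    ridgelessRisk_div_sub_one_sq (r := √s) (by linarith) (by linarith)

lemma one_lt_div_sub_one {r : ℝ} (hr : 1 < r) : 1 < r / (r - 1) := by
  rw [lt_div_iff₀ (by linarith)]
  linarith

/-- **Optimal one-step splitting for ridgeless regression with isotropic features.**
For `s > 1`, the minimum over `x, y ∈ (1, ∞)` of the composed excess risk
`h(y; h(x; s))` equals `2·√(2√s − 1) − 1`, attained at `x = √s/(√s − 1)` and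
`y = √(2√s − 1)/(√(2√s − 1) − 1)`. -/
theorem one_step_ridgeless_risk_minimum (s : ℝ) (hs : 1 < s) :
    Real.sqrt s / (Real.sqrt s - 1) ∈ Set.Ioi (1 : ℝ) ∧
    Real.sqrt (2 * Real.sqrt s - 1) / (Real.sqrt (2 * Real.sqrt s - 1) - 1)
      ∈ Set.Ioi (1 : ℝ) ∧
    ridgelessRisk
        (Real.sqrt (2 * Real.sqrt s - 1) / (Real.sqrt (2 * Real.sqrt s - 1) - 1))
        (ridgelessRisk (Real.sqrt s / (Real.sqrt s - 1)) s)
      = 2 * Real.sqrt (2 * Real.sqrt s - 1) - 1 ∧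
    ∀ x ∈ Set.Ioi (1 : ℝ), ∀ y ∈ Set.Ioi (1 : ℝ),
      2 * Real.sqrt (2 * Real.sqrt s - 1) - 1 ≤ ridgelessRisk y (ridgelessRisk x s) := by
  have hr : 1 < √s := (Real.lt_sqrt zero_le_one).2 (by simpa using hs)
  have hu : 1 < 2 * √s - 1 := by linarith
  have ht : 1 < √(2 * √s - 1) := (Real.lt_sqrt zero_le_one).2 (by simpa using hu)
  refine ⟨one_lt_div_sub_one hr, one_lt_div_sub_one ht, ?_, fun x hx y hy => ?_⟩
  · rw [ridgelessRisk_sqrt_div_sqrt_sub_one hs, ridgelessRisk_sqrt_div_sqrt_sub_one hu]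
  · calc 2 * √(2 * √s - 1) - 1 ≤ ridgelessRisk y (2 * √s - 1) :=
          two_mul_sqrt_sub_one_le_ridgelessRisk (by linarith) hy
      _ ≤ ridgelessRisk y (ridgelessRisk x s) :=
          ridgelessRisk_monotone hy (two_mul_sqrt_sub_one_le_ridgelessRisk (by linarith) hx)
end

section
/- Let γ ∈ (0, 1). Then inf { (x/(1 − x))·(1 − 1/y) + 1/(y − 1) : 0 < x < 1, y > 1, 1/x + 1/y ≤ 1/γ } = γ/(1 − γ). -/
open Set Filter

private lemma one_step_key (γ x y : ℝ) (hγ0 : 0 < γ) (hγ1 : γ < 1) (hx0 : 0 < x) (hx1 : x < 1)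
    (hy : 1 < y) (hcon : γ * (x + y) ≤ x * y) :
    0 ≤ x*(y-1)^2*(1-γ) + (1-x)*y*(1-γ) - γ*(1-x)*y*(y-1) := by
  have hy0 : (0:ℝ) < y := by linarith
  have hyγ : 0 < y - γ := by linarith
  have hyγ2 : 0 < (1-γ)*y - γ := by nlinarith [mul_pos hx0 hyγ]
  rcases le_or_gt (y^2-(3-2*γ)*y+(1-γ)) 0 with hA | hA
  · nlinarith [mul_nonneg (neg_nonneg.2 hA) (sub_pos.2 hx1).le,
      mul_nonneg (sub_pos.2 hγ1).le (sq_nonneg (y-1))]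
  · have h3 : 0 < 3*γ^2 - 3*γ + 1 := by nlinarith [sq_nonneg (2*γ-1)]
    have h5 : 0 ≤ (y^2-(3-2*γ)*y+(1-γ)) * (x*(y-γ) - γ*y) := by
      apply mul_nonneg hA.le; nlinarith
    have hq : 0 < (y-γ)*(1-γ) := mul_pos hyγ (by linarith)
    nlinarith [mul_nonneg hy0.le (mul_nonneg h3.le hyγ2.le),
      mul_nonneg hy0.le (mul_nonneg hγ0.le (sq_nonneg (1-2*γ))),
      mul_nonneg (sub_pos.2 hγ1).le h5, hq]

/-- **Optimal value of the underparameterized branch of the one-step risk optimization.**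
For `γ ∈ (0, 1)`, the infimum of `(x/(1 − x))·(1 − 1/y) + 1/(y − 1)` over `0 < x < 1`,
`y > 1` subject to `1/x + 1/y ≤ 1/γ` equals `γ/(1 − γ)`. -/
theorem one_step_underparam_infimum (γ : ℝ) (hγ : γ ∈ Set.Ioo (0 : ℝ) 1) :
    IsGLB {v : ℝ | ∃ x y : ℝ, 0 < x ∧ x < 1 ∧ 1 < y ∧ 1 / x + 1 / y ≤ 1 / γ ∧
        v = x / (1 - x) * (1 - 1 / y) + 1 / (y - 1)}
      (γ / (1 - γ)) := by
  obtain ⟨hγ0, hγ1⟩ := hγ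
  have h1γ : 0 < 1 - γ := by linarith
  constructor
  · -- lower bound
    rintro v ⟨x, y, hx0, hx1, hy1, hcon, rfl⟩
    have hy0 : (0:ℝ) < y := by linarith
    have h1x : 0 < 1 - x := by linarith
    have hym : 0 < y - 1 := by linarith
    have hcon' : γ * (x + y) ≤ x * y := by
      rw [div_add_div _ _ hx0.ne' hy0.ne', div_le_div_iff₀ (mul_pos hx0 hy0) hγ0] at hcon
      nlinarith
    have e : x/(1-x)*(1-1/y) + 1/(y-1) - γ/(1-γ)
        = (x*(y-1)^2*(1-γ) + (1-x)*y*(1-γ) - γ*(1-x)*y*(y-1)) / ((1-x)*y*(y-1)*(1-γ)) := by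
      field_simp
    have hnum := one_step_key γ x y hγ0 hγ1 hx0 hx1 hy1 hcon'
    have hden : 0 < (1-x)*y*(y-1)*(1-γ) := by positivity
    have := div_nonneg hnum hden.le
    rw [← e] at this
    linarith
  · -- greatest lower bound
    rintro b hb
    set g : ℝ → ℝ := fun y => γ/(1-γ) + (γ*(2*γ-1)/(1-γ)) * ((1-γ)*y-γ)⁻¹ + (y-1)⁻¹ with hg
    have t1 : Tendsto (fun y : ℝ => (1-γ)*y - γ) atTop atTop := by
      apply tendsto_atTop_add_const_right
      exact Tendsto.const_mul_atTop h1γ tendsto_id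
    have t2 : Tendsto (fun y : ℝ => y - 1) atTop atTop :=
      tendsto_atTop_add_const_right _ (-1) tendsto_id
    have tg : Tendsto g atTop (nhds (γ/(1-γ))) := by
      have : Tendsto g atTop (nhds (γ/(1-γ) + (γ*(2*γ-1)/(1-γ)) * 0 + 0)) := by
        exact ((tendsto_const_nhds.add
          (tendsto_const_nhds.mul t1.inv_tendsto_atTop)).add t2.inv_tendsto_atTop)
      simpa using this
    have hmem : ∀ᶠ y in atTop, g y ∈ {v : ℝ | ∃ x y : ℝ, 0 < x ∧ x < 1 ∧ 1 < y ∧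
        1 / x + 1 / y ≤ 1 / γ ∧ v = x / (1 - x) * (1 - 1 / y) + 1 / (y - 1)} := by
      filter_upwards [eventually_gt_atTop (1:ℝ), eventually_gt_atTop (γ/(1-γ))] with y hy1 hy2
      have hy0 : (0:ℝ) < y := by linarith
      have hyγ : 0 < y - γ := by linarith
      have hym : 0 < y - 1 := by linarith
      have hyγ2 : 0 < (1-γ)*y - γ := by
        rw [div_lt_iff₀ h1γ] at hy2; nlinarith
      refine ⟨γ*y/(y-γ), y, div_pos (mul_pos hγ0 hy0) hyγ, ?_, hy1, ?_, ?_⟩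
      · rw [div_lt_one hyγ]; nlinarith
      · have : 1/(γ*y/(y-γ)) + 1/y = 1/γ := by
          rw [one_div_div]
          field_simp
          ring
        linarith
      · have h1x : (0:ℝ) < 1 - γ*y/(y-γ) := by
          rw [sub_pos, div_lt_one hyγ]; nlinarith
        have hx1eq : 1 - γ*y/(y-γ) = ((1-γ)*y-γ)/(y-γ) := by
          field_simp; ring
        rw [hg, hx1eq, div_div_eq_mul_div, div_mul_cancel₀ _ hyγ.ne']
        field_simp
        ring
    have hle : ∀ᶠ y in atTop, b ≤ g y := by
      filter_upwards [hmem] with y hy using hb hy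
    exact ge_of_tendsto tg hle
end

section
/- Let (Ω, F, μ) be a probability space, X₀ : Ω → ℝ^p a random vector and Y₀ : Ω → ℝ a square-integrable random variable. Let g₁, …, g_N : ℝ^p → ℝ be measurable functions with each g_i(X₀) square-integrable, and set ḡ = (1/N)·Σ_{i=1}^N g_i. Let I₁, …, I_M : Ω → {1, …, N} be i.i.d. uniformly distributed on {1, …, N} and independent of the pair (X₀, Y₀). Then E[ (Y₀ − (1/M)·Σ_{j=1}^M g_{I_j}(X₀))² ] = E[ (Y₀ − ḡ(X₀))² ] + (1/M)·(1/N)·Σ_{i=1}^N E[ (g_i(X₀) − ḡ(X₀))² ]. -/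
/-!
Conditionally on `(X₀, Y₀) = (x, y)`, the bagged prediction is the sample mean of `M` i.i.d.
copies of `g_I x` with `I` uniform on `Fin N`; these have mean `ḡ x` and variance
`N⁻¹ ∑ᵢ (gᵢ x - ḡ x)²`. The bias–variance decomposition of the squared error of a sample mean
then gives `(y - ḡ x)² + M⁻¹ N⁻¹ ∑ᵢ (gᵢ x - ḡ x)²` for the conditional risk, and independence
of the indices from `(X₀, Y₀)` lets us integrate this identity against the law of `(X₀, Y₀)`
(Fubini over the finite index space).
-/

open MeasureTheory ProbabilityTheory

theorem integral_sq_const_sub_average_pi {ι S : Type*} [Fintype ι] [Nonempty ι]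
    [MeasurableSpace S] (ν : Measure S) [IsProbabilityMeasure ν]
    {a : S → ℝ} (ha : MemLp a 2 ν) (y : ℝ) :
    ∫ k, (y - (Fintype.card ι : ℝ)⁻¹ * ∑ j, a (k j)) ^ 2 ∂(Measure.pi fun _ : ι => ν)
      = (y - ν[a]) ^ 2 + (Fintype.card ι : ℝ)⁻¹ * Var[a; ν] := by
  set π := Measure.pi fun _ : ι => ν
  set n : ℝ := (Fintype.card ι : ℝ)
  have hn : n ≠ 0 := Nat.cast_ne_zero.mpr Fintype.card_ne_zero
  have hsum : MemLp (fun k : ι → S => ∑ j, a (k j)) 2 π :=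
    memLp_finsetSum _ fun j _ => ha.comp_measurePreserving (measurePreserving_eval _ j)
  have hW : MemLp (fun k => y - n⁻¹ * ∑ j, a (k j)) 2 π := (memLp_const y).sub (hsum.const_mul _)
  have hmean : π[fun k => ∑ j, a (k j)] = n * ν[a] := by
    rw [integral_finsetSum _ fun j _ => integrable_comp_eval (ha.integrable one_le_two),
      Finset.sum_congr rfl fun j _ => integral_comp_eval (μ := fun _ : ι => ν) ha.1]
    simp [n]
  have hvar : Var[fun k => ∑ j, a (k j); π] = n * Var[a; ν] := by
    simpa [n, Finset.sum_fn] using variance_sum_pi (μ := fun _ : ι => ν) (fun _ => ha)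
  calc π[fun k => (y - n⁻¹ * ∑ j, a (k j)) ^ 2]
      = Var[fun k => y - n⁻¹ * ∑ j, a (k j); π] + π[fun k => y - n⁻¹ * ∑ j, a (k j)] ^ 2 := by
        rw [variance_eq_sub hW]
        simp
    _ = (y - ν[a]) ^ 2 + n⁻¹ * Var[a; ν] := by
        rw [variance_const_sub (hsum.const_mul _).aestronglyMeasurable, variance_const_mul, hvar,
          integral_sub (integrable_const y) ((hsum.integrable one_le_two).const_mul _),
          integral_const_mul, hmean, integral_const, probReal_univ, one_smul]
        field_simp
        ring

section Uniform

variable {α : Type*} [Fintype α] [Nonempty α] [MeasurableSpace α] [DiscreteMeasurableSpace α]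

theorem integral_uniformOfFintype (f : α → ℝ) :
    ∫ x, f x ∂(PMF.uniformOfFintype α).toMeasure = (Fintype.card α : ℝ)⁻¹ * ∑ x, f x := by
  simp [PMF.integral_eq_sum, PMF.uniformOfFintype_apply, Finset.mul_sum]

theorem variance_uniformOfFintype (f : α → ℝ) :
    Var[f; (PMF.uniformOfFintype α).toMeasure]
      = (Fintype.card α : ℝ)⁻¹ * ∑ x, (f x - (Fintype.card α : ℝ)⁻¹ * ∑ y, f y) ^ 2 := by
  rw [variance_eq_integral (Measurable.of_discrete).aemeasurable, integral_uniformOfFintype,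
    integral_uniformOfFintype]

theorem integral_sq_sub_average_pi_uniformOfFintype {ι : Type*} [Fintype ι] [Nonempty ι]
    (y : ℝ) (a : α → ℝ) :
    ∫ k, (y - (Fintype.card ι : ℝ)⁻¹ * ∑ j, a (k j)) ^ 2
        ∂(Measure.pi fun _ : ι => (PMF.uniformOfFintype α).toMeasure)
      = (y - (Fintype.card α : ℝ)⁻¹ * ∑ i, a i) ^ 2 + (Fintype.card ι : ℝ)⁻¹ *
          ((Fintype.card α : ℝ)⁻¹ * ∑ i, (a i - (Fintype.card α : ℝ)⁻¹ * ∑ i', a i') ^ 2) := by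
  rw [integral_sq_const_sub_average_pi _ MemLp.of_discrete, integral_uniformOfFintype,
    variance_uniformOfFintype]

end Uniform

/-- Since `K` is finite, integrability of each section `F · k` already gives joint integrability
for Fubini. -/
theorem integral_comp_eq_integral_integral_of_map_eq_prod {Ω E K : Type*} [MeasurableSpace Ω]
    [MeasurableSpace E] [MeasurableSpace K] [Finite K] [MeasurableSingletonClass K]
    {μ : Measure Ω} [SFinite μ] {U : Ω → E} {V : Ω → K} (hU : Measurable U) (hV : Measurable V)
    {π : Measure K} [IsFiniteMeasure π] (hlaw : μ.map (fun ω => (U ω, V ω)) = (μ.map U).prod π)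
    {F : E → K → ℝ} (hF : ∀ k, Measurable (F · k))
    (hFint : ∀ k, Integrable (fun ω => F (U ω) k) μ) :
    ∫ ω, F (U ω) (V ω) ∂μ = ∫ ω, ∫ k, F (U ω) k ∂π ∂μ := by
  have hFm : Measurable (Function.uncurry F) := measurable_from_prod_countable_left hF
  have hFprod : Integrable (Function.uncurry F) ((μ.map U).prod π) :=
    (integrable_prod_iff' hFm.aestronglyMeasurable).mpr ⟨ae_of_all _ fun k =>
      (integrable_map_measure (hF k).aestronglyMeasurable hU.aemeasurable).mpr (hFint k),
      .of_finite⟩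
  calc ∫ ω, F (U ω) (V ω) ∂μ
      = ∫ z, Function.uncurry F z ∂(μ.map fun ω => (U ω, V ω)) :=
        (integral_map (hU.prodMk hV).aemeasurable hFm.aestronglyMeasurable).symm
    _ = ∫ e, ∫ k, F e k ∂π ∂(μ.map U) := by rw [hlaw, integral_prod _ hFprod]; rfl
    _ = ∫ ω, ∫ k, F (U ω) k ∂π ∂μ :=
        integral_map hU.aemeasurable
          (hFm.stronglyMeasurable.integral_prod_right' (ν := π)).aestronglyMeasurable

/-- **Squared-risk decomposition for the bagged (subsample-averaged) predictor.**
Let `(Ω, F, μ)` be a probability space, `X₀ : Ω → ℝ^p` a random vector and `Y₀ : Ω → ℝ`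
square-integrable. Let `g 1, …, g N : ℝ^p → ℝ` be measurable with each `g i (X₀)`
square-integrable, and let `ḡ = (1/N) Σᵢ g i`. Let `Idx 1, …, Idx M : Ω → {1, …, N}` be
i.i.d. uniform on `{1, …, N}` and independent of `(X₀, Y₀)` — expressed by the equality
of the joint law of `((X₀, Y₀), (Idx j)ⱼ)` with the product of the law of `(X₀, Y₀)` and
the `M`-fold product of uniform distributions. Then
`E[(Y₀ − (1/M) Σⱼ g_{Idx j}(X₀))²]
  = E[(Y₀ − ḡ(X₀))²] + (1/M)·(1/N)·Σᵢ E[(g i (X₀) − ḡ(X₀))²]`. -/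
theorem bagged_predictor_squared_risk_decomposition
    {Ω : Type*} [MeasurableSpace Ω] (μ : Measure Ω) [IsProbabilityMeasure μ]
    {p N M : ℕ} [NeZero N] [NeZero M]
    (X₀ : Ω → Fin p → ℝ) (Y₀ : Ω → ℝ) (hX₀ : Measurable X₀) (hY₀ : Measurable Y₀)
    (hY₀2 : MemLp Y₀ 2 μ)
    (g : Fin N → (Fin p → ℝ) → ℝ) (hg : ∀ i, Measurable (g i))
    (hg2 : ∀ i, MemLp (fun ω => g i (X₀ ω)) 2 μ)
    (Idx : Fin M → Ω → Fin N) (hIdx : ∀ j, Measurable (Idx j))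
    (hlaw : Measure.map (fun ω => ((X₀ ω, Y₀ ω), fun j => Idx j ω)) μ =
      (Measure.map (fun ω => (X₀ ω, Y₀ ω)) μ).prod
        (Measure.pi fun _ : Fin M => (PMF.uniformOfFintype (Fin N)).toMeasure)) :
    ∫ ω, (Y₀ ω - (1 / (M : ℝ)) * ∑ j : Fin M, g (Idx j ω) (X₀ ω)) ^ 2 ∂μ
      = (∫ ω, (Y₀ ω - (1 / (N : ℝ)) * ∑ i : Fin N, g i (X₀ ω)) ^ 2 ∂μ)
        + (1 / (M : ℝ)) * ((1 / (N : ℝ)) * ∑ i : Fin N,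
            ∫ ω, (g i (X₀ ω) - (1 / (N : ℝ)) * ∑ i' : Fin N, g i' (X₀ ω)) ^ 2 ∂μ) := by
  simp only [one_div]
  have hmean : MemLp (fun ω => (N : ℝ)⁻¹ * ∑ i, g i (X₀ ω)) 2 μ :=
    (memLp_finsetSum _ fun i _ => hg2 i).const_mul _
  calc ∫ ω, (Y₀ ω - (M : ℝ)⁻¹ * ∑ j, g (Idx j ω) (X₀ ω)) ^ 2 ∂μ
      = ∫ ω, ∫ k, (Y₀ ω - (M : ℝ)⁻¹ * ∑ j, g (k j) (X₀ ω)) ^ 2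
          ∂(Measure.pi fun _ : Fin M => (PMF.uniformOfFintype (Fin N)).toMeasure) ∂μ :=
        integral_comp_eq_integral_integral_of_map_eq_prod (hX₀.prodMk hY₀)
          (measurable_pi_lambda _ hIdx) hlaw
          (F := fun e k => (e.2 - (M : ℝ)⁻¹ * ∑ j, g (k j) e.1) ^ 2) (fun k => by fun_prop)
          (fun k => (hY₀2.sub ((memLp_finsetSum _ fun j _ => hg2 (k j)).const_mul _)).integrable_sq)
    _ = ∫ ω, ((Y₀ ω - (N : ℝ)⁻¹ * ∑ i, g i (X₀ ω)) ^ 2 + (M : ℝ)⁻¹ *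
          ((N : ℝ)⁻¹ * ∑ i, (g i (X₀ ω) - (N : ℝ)⁻¹ * ∑ i', g i' (X₀ ω)) ^ 2)) ∂μ := by
        congr with ω
        simpa using integral_sq_sub_average_pi_uniformOfFintype (ι := Fin M) (Y₀ ω) (g · (X₀ ω))
    _ = _ := by
        have hbias : Integrable (fun ω => (Y₀ ω - (N : ℝ)⁻¹ * ∑ i, g i (X₀ ω)) ^ 2) μ :=
          (hY₀2.sub hmean).integrable_sq
        have hdev : ∀ i ∈ Finset.univ, Integrable
            (fun ω => (g i (X₀ ω) - (N : ℝ)⁻¹ * ∑ i', g i' (X₀ ω)) ^ 2) μ :=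
          fun i _ => ((hg2 i).sub hmean).integrable_sq
        rw [integral_add hbias (((integrable_finsetSum _ hdev).const_mul _).const_mul _),
          integral_const_mul, integral_const_mul, integral_finsetSum _ hdev]
end
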